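/- arXiv:1509.08213 — 7 statements merged into one kernel-verified Lean document; each statement's English description precedes it below -/
import Mathlib

section
/- Let n ≥ 0 and let f_1, …, f_n, g, h : ℝ → ℝ be smooth functions. Then W[ W[f_1, …, f_n, g], W[f_1, …, f_n, h] ](x) = W[f_1, …, f_n](x) · W[f_1, …, f_n, g, h](x) for every x ∈ ℝ. -/
/-- The Wronskian of a family of `n` functions `f 0, …, f (n-1) : ℝ → ℝ` at a point `x`:
`W[f_1, …, f_n](x) = det( f_k^{(j-1)}(x) )_{1 ≤ j,k ≤ n}` (equal to `1` when `n = 0`). -/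
noncomputable def wronskian {n : ℕ} (f : Fin n → ℝ → ℝ) (x : ℝ) : ℝ :=
  Matrix.det (Matrix.of fun j k : Fin n => iteratedDeriv (j : ℕ) (f k) x)

open Matrix Finset

namespace WW


private lemma hasDerivAt_det_col {m : ℕ} (M : ℝ → Matrix (Fin m) (Fin m) ℝ)
    (M' : Matrix (Fin m) (Fin m) ℝ) (x : ℝ)
    (h : ∀ i j, HasDerivAt (fun t => M t i j) (M' i j) x) :
    HasDerivAt (fun t => (M t).det)
      (∑ i, ((M x).updateCol i (fun r => M' r i)).det) x := by
  classical
  have e1 : (fun t => (M t).det) = fun t =>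
      ∑ σ : Equiv.Perm (Fin m), ((Equiv.Perm.sign σ : ℤ) : ℝ) * ∏ i, M t (σ i) i := by
    funext t
    rw [Matrix.det_apply']
  rw [e1]
  have hterm : ∀ σ : Equiv.Perm (Fin m),
      HasDerivAt (fun t => ((Equiv.Perm.sign σ : ℤ) : ℝ) * ∏ i, M t (σ i) i)
        (((Equiv.Perm.sign σ : ℤ) : ℝ) *
          ∑ i, (∏ j ∈ Finset.univ.erase i, M x (σ j) j) * M' (σ i) i) x := by
    intro σ
    have := (HasDerivAt.fun_finsetProd (u := Finset.univ)
      (f := fun i t => M t (σ i) i) (f' := fun i => M' (σ i) i)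
      (fun i _ => h (σ i) i)).const_mul ((Equiv.Perm.sign σ : ℤ) : ℝ)
    simpa [smul_eq_mul] using this
  have hsum := HasDerivAt.fun_sum (u := Finset.univ) (fun σ _ => hterm σ)
  refine hsum.congr_deriv ?_
  symm
  simp only [Finset.mul_sum]
  rw [Finset.sum_comm]
  refine Finset.sum_congr rfl fun i _ => ?_
  rw [Matrix.det_apply']
  refine Finset.sum_congr rfl fun σ _ => ?_
  congr 1
  rw [← Finset.mul_prod_erase Finset.univ _ (Finset.mem_univ i)]
  rw [Matrix.updateCol_self]
  rw [mul_comm]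
  congr 1
  refine Finset.prod_congr rfl fun j hj => ?_
  rw [Matrix.updateCol_ne (Finset.ne_of_mem_erase hj)]


private lemma hasDerivAt_det_row {m : ℕ} (M : ℝ → Matrix (Fin m) (Fin m) ℝ)
    (M' : Matrix (Fin m) (Fin m) ℝ) (x : ℝ)
    (h : ∀ i j, HasDerivAt (fun t => M t i j) (M' i j) x) :
    HasDerivAt (fun t => (M t).det)
      (∑ i, ((M x).updateRow i (M' i)).det) x := by
  have key := hasDerivAt_det_col (fun t => (M t)ᵀ) (M')ᵀ x (fun i j => h j i)
  simp only [Matrix.det_transpose] at key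
  convert key using 1
  refine Finset.sum_congr rfl fun i _ => ?_
  have : ((M x)ᵀ.updateCol i fun r => (M')ᵀ r i) = ((M x).updateRow i (M' i))ᵀ := by
    rw [Matrix.updateCol_transpose]
    rfl
  rw [this, Matrix.det_transpose]

/-- The noncomputable `wronskian` has a derivative: the determinant with last row pushed
to one-higher derivatives. -/
private lemma wronskian_hasDerivAt {m : ℕ} (F : Fin (m+1) → ℝ → ℝ)
    (hF : ∀ k, ContDiff ℝ (⊤ : ℕ∞) (F k)) (x : ℝ) :
    HasDerivAt (wronskian F)
      (Matrix.det (Matrix.of fun j k : Fin (m+1) =>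
        iteratedDeriv (if j = Fin.last m then m + 1 else (j : ℕ)) (F k) x)) x := by
  classical
  have hentry : ∀ (j : ℕ) (k : Fin (m+1)),
      HasDerivAt (fun t => iteratedDeriv j (F k) t) (iteratedDeriv (j+1) (F k) x) x := by
    intro j k
    have hdiff : DifferentiableAt ℝ (iteratedDeriv j (F k)) x := by
      have : ContDiff ℝ (⊤ : ℕ∞) (iteratedDeriv j (F k)) := by
        rw [iteratedDeriv_eq_iterate]
        exact ((hF k).of_le (by simp)).iterate_deriv j
      exact (this.differentiable (by simp)).differentiableAt
    have := hdiff.hasDerivAt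
    rwa [show deriv (iteratedDeriv j (F k)) x = iteratedDeriv (j+1) (F k) x by
      rw [iteratedDeriv_succ]] at this
  have key := hasDerivAt_det_row
    (fun t => Matrix.of fun j k : Fin (m+1) => iteratedDeriv (j : ℕ) (F k) t)
    (Matrix.of fun j k : Fin (m+1) => iteratedDeriv ((j : ℕ) + 1) (F k) x) x
    (fun i j => hentry (i : ℕ) j)
  have hsum : ∑ i : Fin (m+1),
      ((Matrix.of fun j k : Fin (m+1) => iteratedDeriv (j : ℕ) (F k) x).updateRow i
        ((Matrix.of fun j k : Fin (m+1) => iteratedDeriv ((j : ℕ) + 1) (F k) x) i)).det =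
      Matrix.det (Matrix.of fun j k : Fin (m+1) =>
        iteratedDeriv (if j = Fin.last m then m + 1 else (j : ℕ)) (F k) x) := by
    rw [Finset.sum_eq_single (Fin.last m)]
    · congr 1
      ext j k
      by_cases hj : j = Fin.last m
      · subst hj
        simp [Matrix.updateRow_apply]
      · simp [Matrix.updateRow_apply, hj]
    · intro i _ hi
      have hlt : (i : ℕ) < m := by
        have := i.isLt
        rcases Nat.lt_or_ge (i : ℕ) m with h' | h'
        · exact h'
        · exact absurd (Fin.ext (by simp only [Fin.val_last]; omega)) hi
      set i' : Fin (m+1) := ⟨(i : ℕ) + 1, by omega⟩ with hi'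
      have hrow : ((Matrix.of fun j k : Fin (m+1) =>
          iteratedDeriv ((j : ℕ) + 1) (F k) x) i) =
          ((Matrix.of fun j k : Fin (m+1) => iteratedDeriv (j : ℕ) (F k) x) i') := by
        funext k
        simp [hi']
      rw [hrow]
      exact Matrix.det_updateRow_eq_zero (by
        intro hcontra
        rw [Fin.ext_iff] at hcontra
        simp only [hi'] at hcontra
        omega)
    · simp
  rw [hsum] at key
  exact key



private lemma cast2 (n : ℕ) (i : Fin n) : Fin.castAdd 2 i = i.castSucc.castSucc := rfl

private lemma natAdd0 (n : ℕ) : Fin.natAdd n (0 : Fin 2) = (Fin.last n).castSucc := by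
  ext; simp

private lemma natAdd1 (n : ℕ) : Fin.natAdd n (1 : Fin 2) = Fin.last (n+1) := by
  ext; simp

private lemma dj_key {n : ℕ} {R : Type*} [CommRing R] (A : Matrix (Fin (n+2)) (Fin (n+2)) R) :
    A.det * (adjugate A ((Fin.last n).castSucc) ((Fin.last n).castSucc) *
        adjugate A (Fin.last (n+1)) (Fin.last (n+1)) -
      adjugate A ((Fin.last n).castSucc) (Fin.last (n+1)) *
        adjugate A (Fin.last (n+1)) ((Fin.last n).castSucc)) =
    A.det * (A.det *
      (A.submatrix (fun i : Fin n => i.castSucc.castSucc)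
        (fun i : Fin n => i.castSucc.castSucc)).det) := by
  classical
  set B : Matrix (Fin (n+2)) (Fin (n+2)) R :=
    Matrix.of (fun i j => if (j : ℕ) < n then (if i = j then (1:R) else 0) else adjugate A i j)
    with hB
  have hAB : A * B = Matrix.of (fun i j : Fin (n+2) =>
      if (j : ℕ) < n then A i j else if i = j then A.det else 0) := by
    ext i j
    simp only [Matrix.mul_apply, hB, Matrix.of_apply]
    by_cases hj : (j : ℕ) < n
    · simp only [hj, if_true, mul_ite, mul_one, mul_zero]
      rw [Finset.sum_ite_eq' Finset.univ j (fun k => A i k)]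
      simp
    · simp only [hj, if_false]
      have : ∑ k, A i k * adjugate A k j = (A * adjugate A) i j := (Matrix.mul_apply).symm
      rw [this, Matrix.mul_adjugate]
      simp [Matrix.one_apply, mul_ite]
  have hdetB : B.det =
      adjugate A ((Fin.last n).castSucc) ((Fin.last n).castSucc) *
        adjugate A (Fin.last (n+1)) (Fin.last (n+1)) -
      adjugate A ((Fin.last n).castSucc) (Fin.last (n+1)) *
        adjugate A (Fin.last (n+1)) ((Fin.last n).castSucc) := by
    rw [← Matrix.det_submatrix_equiv_self finSumFinEquiv B]
    have hBblocks : B.submatrix finSumFinEquiv finSumFinEquiv =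
        Matrix.fromBlocks 1
          (Matrix.of fun (i : Fin n) (j : Fin 2) => adjugate A (Fin.castAdd 2 i) (Fin.natAdd n j))
          0
          (Matrix.of fun (i j : Fin 2) => adjugate A (Fin.natAdd n i) (Fin.natAdd n j)) := by
      ext i j
      cases i with
      | inl i =>
        cases j with
        | inl j =>
          simp only [Matrix.submatrix_apply, finSumFinEquiv_apply_left, hB, Matrix.of_apply,
            Matrix.fromBlocks_apply₁₁, Matrix.one_apply]
          have : ((Fin.castAdd 2 j : Fin (n+2)) : ℕ) < n := j.isLt
          simp only [this, if_true]
          congr 1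
          simp [Fin.ext_iff]
        | inr j =>
          simp only [Matrix.submatrix_apply, finSumFinEquiv_apply_left, finSumFinEquiv_apply_right,
            hB, Matrix.of_apply, Matrix.fromBlocks_apply₁₂]
          have : ¬ ((Fin.natAdd n j : Fin (n+2)) : ℕ) < n := by simp
          simp [this]
      | inr i =>
        cases j with
        | inl j =>
          simp only [Matrix.submatrix_apply, finSumFinEquiv_apply_left, finSumFinEquiv_apply_right,
            hB, Matrix.of_apply, Matrix.fromBlocks_apply₂₁, Matrix.zero_apply]
          have h1 : ((Fin.castAdd 2 j : Fin (n+2)) : ℕ) < n := j.isLt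
          have h2 : Fin.natAdd n i ≠ Fin.castAdd 2 j := by
            intro hc
            have := congrArg Fin.val hc
            simp at this
            omega
          simp [h1, h2]
        | inr j =>
          have : ¬ ((Fin.natAdd n j : Fin (n+2)) : ℕ) < n := by simp
          simp [hB, this]
    rw [hBblocks, Matrix.det_fromBlocks_zero₂₁, Matrix.det_one, one_mul, Matrix.det_fin_two]
    simp [natAdd0, natAdd1]
  have hdetAB : (A * B).det = A.det * A.det *
      (A.submatrix (fun i : Fin n => i.castSucc.castSucc)
        (fun i : Fin n => i.castSucc.castSucc)).det := by
    rw [hAB, ← Matrix.det_submatrix_equiv_self finSumFinEquiv]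
    have hblocks : (Matrix.of (fun i j : Fin (n+2) =>
        if (j : ℕ) < n then A i j else if i = j then A.det else 0)).submatrix
          finSumFinEquiv finSumFinEquiv =
        Matrix.fromBlocks
          (A.submatrix (fun i : Fin n => i.castSucc.castSucc) (fun i : Fin n => i.castSucc.castSucc))
          0
          (Matrix.of fun (i : Fin 2) (j : Fin n) => A (Fin.natAdd n i) (j.castSucc.castSucc))
          (A.det • 1) := by
      ext i j
      cases i with
      | inl i =>
        cases j with
        | inl j =>
          have : ((Fin.castAdd 2 j : Fin (n+2)) : ℕ) < n := j.isLt
          simp [this, cast2]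
        | inr j =>
          have h1 : ¬ ((Fin.natAdd n j : Fin (n+2)) : ℕ) < n := by simp
          have h2 : Fin.castAdd 2 i ≠ Fin.natAdd n j := by
            intro hc
            have := congrArg Fin.val hc
            simp at this
            omega
          simp [h1, h2]
      | inr i =>
        cases j with
        | inl j =>
          have : ((Fin.castAdd 2 j : Fin (n+2)) : ℕ) < n := j.isLt
          simp [this, cast2]
        | inr j =>
          have h1 : ¬ ((Fin.natAdd n j : Fin (n+2)) : ℕ) < n := by simp
          have h2 : Fin.natAdd n i = Fin.natAdd n j ↔ i = j := by
            simp [Fin.ext_iff]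
          simp only [Matrix.submatrix_apply, finSumFinEquiv_apply_right, Matrix.of_apply, h1,
            if_false, Matrix.fromBlocks_apply₂₂, Matrix.smul_apply, Matrix.one_apply, smul_eq_mul]
          by_cases h : i = j <;> simp [h, h2]
    rw [hblocks, Matrix.det_fromBlocks_zero₁₂, Matrix.det_smul, Matrix.det_one]
    simp [Fintype.card_fin]
    ring
  rw [← hdetB, ← Matrix.det_mul, hdetAB]
  ring


private lemma dj_adj {n : ℕ} {R : Type*} [CommRing R] (A : Matrix (Fin (n+2)) (Fin (n+2)) R) :
    adjugate A ((Fin.last n).castSucc) ((Fin.last n).castSucc) *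
        adjugate A (Fin.last (n+1)) (Fin.last (n+1)) -
      adjugate A ((Fin.last n).castSucc) (Fin.last (n+1)) *
        adjugate A (Fin.last (n+1)) ((Fin.last n).castSucc) =
    A.det * (A.submatrix (fun i : Fin n => i.castSucc.castSucc)
        (fun i : Fin n => i.castSucc.castSucc)).det := by
  classical
  set G := mvPolynomialX (Fin (n+2)) (Fin (n+2)) ℤ with hGdef
  set φ : MvPolynomial (Fin (n+2) × Fin (n+2)) ℤ →+* R :=
    MvPolynomial.eval₂Hom (Int.castRingHom R) (fun pq => A pq.1 pq.2) with hφdef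
  have hG : φ.mapMatrix G = A := by
    ext i j
    simp [hGdef, hφdef, mvPolynomialX]
  have hGkey :
      adjugate G ((Fin.last n).castSucc) ((Fin.last n).castSucc) *
          adjugate G (Fin.last (n+1)) (Fin.last (n+1)) -
        adjugate G ((Fin.last n).castSucc) (Fin.last (n+1)) *
          adjugate G (Fin.last (n+1)) ((Fin.last n).castSucc) =
      G.det * (G.submatrix (fun i : Fin n => i.castSucc.castSucc)
          (fun i : Fin n => i.castSucc.castSucc)).det :=
    mul_left_cancel₀ (det_mvPolynomialX_ne_zero _ ℤ) (dj_key G)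
  have hadj : ∀ i j, φ (adjugate G i j) = adjugate A i j := by
    intro i j
    have h := RingHom.map_adjugate φ G
    rw [hG] at h
    exact congrFun (congrFun (congrArg (fun M => (M : Matrix _ _ R)) h) i) j
  have hdet : φ G.det = A.det := by rw [RingHom.map_det, hG]
  have hsub : φ ((G.submatrix (fun i : Fin n => i.castSucc.castSucc)
      (fun i : Fin n => i.castSucc.castSucc)).det) =
      (A.submatrix (fun i : Fin n => i.castSucc.castSucc)
      (fun i : Fin n => i.castSucc.castSucc)).det := by
    rw [RingHom.map_det]
    congr 1
    ext i j
    have := congrFun (congrFun (congrArg (fun M => (M : Matrix _ _ R)) hG)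
      (Fin.castSucc (Fin.castSucc i))) (Fin.castSucc (Fin.castSucc j))
    simpa using this
  have := congrArg φ hGkey
  rw [map_sub, _root_.map_mul, _root_.map_mul, _root_.map_mul, hadj, hadj, hadj, hadj, hdet, hsub] at this
  exact this

/-- Desnanot–Jacobi identity (corner form). -/
private lemma dj {n : ℕ} {R : Type*} [CommRing R] (A : Matrix (Fin (n+2)) (Fin (n+2)) R) :
    (A.submatrix ((Fin.last n).castSucc).succAbove ((Fin.last n).castSucc).succAbove).det *
        (A.submatrix (Fin.last (n+1)).succAbove (Fin.last (n+1)).succAbove).det -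
      (A.submatrix (Fin.last (n+1)).succAbove ((Fin.last n).castSucc).succAbove).det *
        (A.submatrix ((Fin.last n).castSucc).succAbove (Fin.last (n+1)).succAbove).det =
    A.det * (A.submatrix (fun i : Fin n => i.castSucc.castSucc)
        (fun i : Fin n => i.castSucc.castSucc)).det := by
  have e1 : adjugate A ((Fin.last n).castSucc) ((Fin.last n).castSucc) =
      (A.submatrix ((Fin.last n).castSucc).succAbove ((Fin.last n).castSucc).succAbove).det := by
    rw [adjugate_fin_succ_eq_det_submatrix]
    have : (-1 : R) ^ (((Fin.last n).castSucc : Fin (n+2)) + ((Fin.last n).castSucc : Fin (n+2)) : ℕ) = 1 := by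
      simp only [Fin.coe_castSucc, Fin.val_last]
      exact Even.neg_one_pow ⟨n, rfl⟩
    rw [this, one_mul]
  have e2 : adjugate A (Fin.last (n+1)) (Fin.last (n+1)) =
      (A.submatrix (Fin.last (n+1)).succAbove (Fin.last (n+1)).succAbove).det := by
    rw [adjugate_fin_succ_eq_det_submatrix]
    have : (-1 : R) ^ ((Fin.last (n+1) : Fin (n+2)) + (Fin.last (n+1) : Fin (n+2)) : ℕ) = 1 := by
      simp only [Fin.val_last]
      exact Even.neg_one_pow ⟨n + 1, rfl⟩
    rw [this, one_mul]
  have e3 : adjugate A ((Fin.last n).castSucc) (Fin.last (n+1)) =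
      -(A.submatrix (Fin.last (n+1)).succAbove ((Fin.last n).castSucc).succAbove).det := by
    rw [adjugate_fin_succ_eq_det_submatrix]
    have : (-1 : R) ^ ((Fin.last (n+1) : Fin (n+2)) + ((Fin.last n).castSucc : Fin (n+2)) : ℕ) = -1 := by
      simp only [Fin.coe_castSucc, Fin.val_last]
      rw [Odd.neg_one_pow ⟨n, by ring⟩]
    rw [this]
    ring
  have e4 : adjugate A (Fin.last (n+1)) ((Fin.last n).castSucc) =
      -(A.submatrix ((Fin.last n).castSucc).succAbove (Fin.last (n+1)).succAbove).det := by
    rw [adjugate_fin_succ_eq_det_submatrix]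
    have : (-1 : R) ^ (((Fin.last n).castSucc : Fin (n+2)) + (Fin.last (n+1) : Fin (n+2)) : ℕ) = -1 := by
      simp only [Fin.coe_castSucc, Fin.val_last]
      rw [Odd.neg_one_pow ⟨n, by ring⟩]
    rw [this]
    ring
  have h := dj_adj A
  rw [e1, e2, e3, e4] at h
  rw [← h]
  ring


private lemma snoc_smooth {m : ℕ} (f : Fin m → ℝ → ℝ) (g : ℝ → ℝ)
    (hf : ∀ k, ContDiff ℝ (⊤ : ℕ∞) (f k)) (hg : ContDiff ℝ (⊤ : ℕ∞) g) :
    ∀ k, ContDiff ℝ (⊤ : ℕ∞) ((Fin.snoc f g : Fin (m+1) → ℝ → ℝ) k) := by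
  intro k
  refine Fin.lastCases ?_ ?_ k
  · simpa [Fin.snoc_last] using hg
  · intro i
    simpa [Fin.snoc_castSucc] using hf i

private lemma succAbove_cs {n : ℕ} (j : Fin n) :
    ((Fin.last n).castSucc).succAbove j.castSucc = j.castSucc.castSucc := by
  apply Fin.succAbove_of_castSucc_lt
  simp [Fin.lt_def]

private lemma succAbove_last' {n : ℕ} :
    ((Fin.last n).castSucc).succAbove (Fin.last n) = Fin.last (n+1) := by
  have h : ((Fin.last n).castSucc : Fin (n+2)) ≤ (Fin.last n).castSucc := le_refl _
  rw [Fin.succAbove_of_le_castSucc _ _ h]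
  ext
  simp

end WW

/-- for smooth `f_1, …, f_n, g, h : ℝ → ℝ` (`n ≥ 0`),
`W[ W[f_1,…,f_n,g], W[f_1,…,f_n,h] ](x) = W[f_1,…,f_n](x) · W[f_1,…,f_n,g,h](x)`. -/
theorem wronskian_wronskian_eq (n : ℕ) (f : Fin n → ℝ → ℝ) (g h : ℝ → ℝ)
    (hf : ∀ k, ContDiff ℝ (⊤ : ℕ∞) (f k)) (hg : ContDiff ℝ (⊤ : ℕ∞) g) (hh : ContDiff ℝ (⊤ : ℕ∞) h) (x : ℝ) :
    wronskian ![wronskian (Fin.snoc f g), wronskian (Fin.snoc f h)] x =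
      wronskian f x * wronskian (Fin.snoc (Fin.snoc f g) h) x := by
  classical
  set F : Fin (n+2) → ℝ → ℝ := Fin.snoc (Fin.snoc f g) h with hF
  have hFsm : ∀ k, ContDiff ℝ (⊤ : ℕ∞) (F k) :=
    WW.snoc_smooth _ _ (WW.snoc_smooth _ _ hf hg) hh
  set A : Matrix (Fin (n+2)) (Fin (n+2)) ℝ :=
    Matrix.of (fun j k : Fin (n+2) => iteratedDeriv (j : ℕ) (F k) x) with hA
  set p : Fin (n+2) := (Fin.last n).castSucc with hp
  set q : Fin (n+2) := Fin.last (n+1) with hq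
  -- identification of the four minors and the core
  have hcolg : ∀ k : Fin (n+1), F (q.succAbove k) = (Fin.snoc f g : Fin (n+1) → ℝ → ℝ) k := by
    intro k
    rw [hq, Fin.succAbove_last, hF, Fin.snoc_castSucc]
  have hcolh : ∀ k : Fin (n+1), F (p.succAbove k) = (Fin.snoc f h : Fin (n+1) → ℝ → ℝ) k := by
    intro k
    refine Fin.lastCases ?_ ?_ k
    · rw [hp, WW.succAbove_last', hF, Fin.snoc_last, Fin.snoc_last]
    · intro i
      rw [hp, WW.succAbove_cs, hF, Fin.snoc_castSucc, Fin.snoc_castSucc, Fin.snoc_castSucc]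
  have hW1 : wronskian (Fin.snoc f g) x = (A.submatrix q.succAbove q.succAbove).det := by
    unfold wronskian
    congr 1
    ext j k
    rw [Matrix.submatrix_apply, hA, Matrix.of_apply, Matrix.of_apply, hcolg]
    rw [hq, Fin.succAbove_last, Fin.coe_castSucc]
  have hW2 : wronskian (Fin.snoc f h) x = (A.submatrix q.succAbove p.succAbove).det := by
    unfold wronskian
    congr 1
    ext j k
    rw [Matrix.submatrix_apply, hA, Matrix.of_apply, Matrix.of_apply, hcolh]
    rw [hq, Fin.succAbove_last, Fin.coe_castSucc]
  have hWf : wronskian f x = (A.submatrix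
      (fun i : Fin n => i.castSucc.castSucc) (fun i : Fin n => i.castSucc.castSucc)).det := by
    unfold wronskian
    congr 1
    ext j k
    rw [Matrix.submatrix_apply, hA, Matrix.of_apply, Matrix.of_apply, hF,
      Fin.snoc_castSucc, Fin.snoc_castSucc, Fin.coe_castSucc, Fin.coe_castSucc]
  have hWfull : wronskian F x = A.det := rfl
  -- derivative rows: the matrix with boosted last row equals the `p.succAbove` submatrix
  have hrow : ∀ (c : Fin (n+1) → Fin (n+2)) (G : Fin (n+1) → ℝ → ℝ)
      (hc : ∀ k, F (c k) = G k),
      (Matrix.of fun j k : Fin (n+1) =>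
        iteratedDeriv (if j = Fin.last n then n + 1 else (j : ℕ)) (G k) x) =
      A.submatrix p.succAbove c := by
    intro c G hc
    ext j k
    rw [Matrix.submatrix_apply, hA, Matrix.of_apply, Matrix.of_apply, hc]
    congr 1
    refine Fin.lastCases ?_ ?_ j
    · rw [if_pos rfl, hp, WW.succAbove_last', Fin.val_last]
    · intro i
      rw [if_neg (by
        intro hcontra
        have := congrArg Fin.val hcontra
        simp at this
        omega), hp, WW.succAbove_cs]
      simp
  have hD1 : HasDerivAt (wronskian (Fin.snoc f g))
      ((A.submatrix p.succAbove q.succAbove).det) x := by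
    have := WW.wronskian_hasDerivAt (Fin.snoc f g) (WW.snoc_smooth _ _ hf hg) x
    rwa [hrow q.succAbove (Fin.snoc f g) hcolg] at this
  have hD2 : HasDerivAt (wronskian (Fin.snoc f h))
      ((A.submatrix p.succAbove p.succAbove).det) x := by
    have := WW.wronskian_hasDerivAt (Fin.snoc f h) (WW.snoc_smooth _ _ hf hh) x
    rwa [hrow p.succAbove (Fin.snoc f h) hcolh] at this
  -- the outer 2×2 Wronskian
  have hlhs : wronskian ![wronskian (Fin.snoc f g), wronskian (Fin.snoc f h)] x =
      wronskian (Fin.snoc f g) x * deriv (wronskian (Fin.snoc f h)) x -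
      wronskian (Fin.snoc f h) x * deriv (wronskian (Fin.snoc f g)) x := by
    unfold wronskian
    rw [Matrix.det_fin_two]
    simp [iteratedDeriv_one, iteratedDeriv_zero]
    try ring
  rw [hlhs, hD1.deriv, hD2.deriv, hW1, hW2, hWf]
  rw [show wronskian (Fin.snoc (Fin.snoc f g) h) x = A.det from rfl]
  have hdj := WW.dj A
  rw [hp, hq] at *
  linarith [hdj]
end

section
/- Let n ≥ 1, let F_1, …, F_n : ℝ → ℝ and η : ℝ → ℝ be smooth functions, and set f_j = F_j ∘ η for each j. Then W[f_1, …, f_n](x) = (η'(x))^{n(n-1)/2} · W[F_1, …, F_n](η(x)) for every x ∈ ℝ. -/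
open scoped ContDiff



noncomputable def bell (η : ℝ → ℝ) : ℕ → ℕ → ℝ → ℝ
  | 0, 0 => fun _ => 1
  | 0, _+1 => fun _ => 0
  | j+1, 0 => deriv (bell η j 0)
  | j+1, i+1 => fun x => deriv (bell η j (i+1)) x + bell η j i x * deriv η x

lemma bell_smooth (η : ℝ → ℝ) (hη : ContDiff ℝ ∞ η) :
    ∀ j i, ContDiff ℝ ∞ (bell η j i) := by
  intro j
  induction j with
  | zero => intro i; cases i <;> · unfold bell; exact contDiff_const
  | succ j ih =>
    intro i
    cases i with
    | zero => exact (contDiff_infty_iff_deriv.mp (ih 0)).2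
    | succ i =>
      show ContDiff ℝ ∞ fun x => deriv (bell η j (i+1)) x + bell η j i x * deriv η x
      exact ((contDiff_infty_iff_deriv.mp (ih (i+1))).2).add
        ((ih i).mul (contDiff_infty_iff_deriv.mp hη).2)

lemma bell_zero_of_lt (η : ℝ → ℝ) : ∀ j i, j < i → bell η j i = 0 := by
  intro j
  induction j with
  | zero => intro i hi; match i, hi with | i+1, _ => rfl
  | succ j ih =>
    intro i hi
    match i, hi with
    | i+1, hi =>
      have h1 : bell η j (i+1) = 0 := ih (i+1) (by omega)
      have h2 : bell η j i = 0 := ih i (by omega)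
      funext x
      show deriv (bell η j (i+1)) x + bell η j i x * deriv η x = 0
      rw [h1, h2, Pi.zero_def, deriv_const]; simp

lemma bell_diag (η : ℝ → ℝ) : ∀ j x, bell η j j x = (deriv η x) ^ j := by
  intro j
  induction j with
  | zero => intro x; rfl
  | succ j ih =>
    intro x
    show deriv (bell η j (j+1)) x + bell η j j x * deriv η x = _
    rw [bell_zero_of_lt η j (j+1) (by omega), Pi.zero_def, deriv_const, ih]
    simp [pow_succ]

lemma one_le_inf : (1 : WithTop ℕ∞) ≤ ∞ := by
  exact_mod_cast le_top

lemma contDiff_iteratedDeriv (F : ℝ → ℝ) (hF : ContDiff ℝ ∞ F) (i : ℕ) :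
    ContDiff ℝ ∞ (iteratedDeriv i F) := by
  rw [iteratedDeriv_eq_iterate]; exact hF.iterate_deriv i

lemma iteratedDeriv_comp_expand (F η : ℝ → ℝ) (hF : ContDiff ℝ ∞ F) (hη : ContDiff ℝ ∞ η) :
    ∀ j x, iteratedDeriv j (F ∘ η) x
      = ∑ i ∈ Finset.range (j+1), bell η j i x * iteratedDeriv i F (η x) := by
  intro j
  induction j with
  | zero =>
    intro x
    rw [Finset.sum_range_one, iteratedDeriv_zero]
    show F (η x) = bell η 0 0 x * F (η x)
    show F (η x) = 1 * F (η x)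
    ring
  | succ j ih =>
    intro x
    have hd : ∀ i, HasDerivAt (fun y => bell η j i y * iteratedDeriv i F (η y))
        (deriv (bell η j i) x * iteratedDeriv i F (η x)
          + bell η j i x * (iteratedDeriv (i+1) F (η x) * deriv η x)) x := by
      intro i
      have hb : HasDerivAt (bell η j i) (deriv (bell η j i) x) x :=
        (((bell_smooth η hη j i).differentiable (by simp)) x).hasDerivAt
      have h1 : HasDerivAt (iteratedDeriv i F) (iteratedDeriv (i+1) F (η x)) (η x) := by
        rw [iteratedDeriv_succ]
        exact (((contDiff_iteratedDeriv F hF i).differentiable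
          (by simp)) _).hasDerivAt
      have hc : HasDerivAt (fun y => iteratedDeriv i F (η y))
          (iteratedDeriv (i+1) F (η x) * deriv η x) x :=
        h1.comp x ((hη.differentiable (by simp)) x).hasDerivAt
      exact hb.mul hc
    have hsum : HasDerivAt
        (fun y => ∑ i ∈ Finset.range (j+1), bell η j i y * iteratedDeriv i F (η y))
        (∑ i ∈ Finset.range (j+1),
          (deriv (bell η j i) x * iteratedDeriv i F (η x)
            + bell η j i x * (iteratedDeriv (i+1) F (η x) * deriv η x))) x :=
      HasDerivAt.fun_sum (fun i _ => hd i)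
    have hfun : iteratedDeriv j (F ∘ η)
        = fun y => ∑ i ∈ Finset.range (j+1), bell η j i y * iteratedDeriv i F (η y) :=
      funext ih
    rw [iteratedDeriv_succ, hfun, hsum.deriv]
    -- algebra
    set T : ℕ → ℝ := fun i => iteratedDeriv i F (η x) with hT
    rw [Finset.sum_range_succ' (fun i => bell η (j+1) i x * T i) (j+1)]
    have hbs : ∀ i, bell η (j+1) (i+1) x
        = deriv (bell η j (i+1)) x + bell η j i x * deriv η x := fun i => rfl
    have hb0 : bell η (j+1) 0 x = deriv (bell η j 0) x := rfl
    simp only [hbs, hb0, add_mul, Finset.sum_add_distrib]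
    have e1 : ∑ i ∈ Finset.range (j+1), deriv (bell η j (i+1)) x * T (i+1)
          + deriv (bell η j 0) x * T 0
        = ∑ i ∈ Finset.range (j+2), deriv (bell η j i) x * T i := by
      rw [Finset.sum_range_succ' (fun i => deriv (bell η j i) x * T i) (j+1)]
    have e2 : ∑ i ∈ Finset.range (j+2), deriv (bell η j i) x * T i
        = ∑ i ∈ Finset.range (j+1), deriv (bell η j i) x * T i := by
      rw [Finset.sum_range_succ]
      rw [bell_zero_of_lt η j (j+1) (by omega), Pi.zero_def, deriv_const]
      ring
    have e3 : ∑ i ∈ Finset.range (j+1), bell η j i x * deriv η x * T (i+1)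
        = ∑ i ∈ Finset.range (j+1), bell η j i x * (T (i+1) * deriv η x) :=
      Finset.sum_congr rfl (fun i _ => by ring)
    linarith [e1, e2, e3]

/-- for smooth `F_1, …, F_n` (`n ≥ 1`) and a smooth change of variable `η`,
with `f_j = F_j ∘ η`, one has
`W[f_1, …, f_n](x) = η'(x)^{n(n-1)/2} · W[F_1, …, F_n](η(x))`. -/
theorem wronskian_comp (n : ℕ) (hn : 1 ≤ n) (F : Fin n → ℝ → ℝ) (η : ℝ → ℝ)
    (hF : ∀ k, ContDiff ℝ (⊤ : ℕ∞) (F k)) (hη : ContDiff ℝ (⊤ : ℕ∞) η) (x : ℝ) :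
    wronskian (fun j => F j ∘ η) x =
      (deriv η x) ^ (n * (n - 1) / 2) * wronskian F (η x) := by
  have hη' : ContDiff ℝ ∞ η := hη.of_le (by simp)
  have entry : ∀ (j k : Fin n), iteratedDeriv (j : ℕ) (F k ∘ η) x
      = ∑ i : Fin n, bell η (j : ℕ) (i : ℕ) x * iteratedDeriv (i : ℕ) (F k) (η x) := by
    intro j k
    rw [iteratedDeriv_comp_expand (F k) η ((hF k).of_le (by simp)) hη',
      Fin.sum_univ_eq_sum_range (fun i => bell η (j : ℕ) i x * iteratedDeriv i (F k) (η x)) n]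
    apply Finset.sum_subset
    · intro i hi
      simp only [Finset.mem_range] at *
      omega
    · intro i _ hnot
      simp only [Finset.mem_range] at hnot
      rw [bell_zero_of_lt η (j : ℕ) i (by omega)]
      simp
  have hM : (Matrix.of fun j k : Fin n => iteratedDeriv (j : ℕ) ((fun j => F j ∘ η) k) x)
      = (Matrix.of fun j i : Fin n => bell η (j : ℕ) (i : ℕ) x)
        * (Matrix.of fun i k : Fin n => iteratedDeriv (i : ℕ) (F k) (η x)) := by
    ext j k
    simp only [Matrix.mul_apply, Matrix.of_apply]
    exact entry j k
  unfold wronskian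
  rw [hM, Matrix.det_mul]
  congr 1
  have htri : Matrix.BlockTriangular
      (Matrix.of fun j i : Fin n => bell η (j : ℕ) (i : ℕ) x) OrderDual.toDual := by
    intro i j hij
    simp only [OrderDual.toDual_lt_toDual] at hij
    rw [Matrix.of_apply, bell_zero_of_lt η (i : ℕ) (j : ℕ) (by exact_mod_cast hij)]
    simp
  rw [Matrix.det_of_lowerTriangular _ htri]
  have : ∀ j : Fin n, (Matrix.of fun j i : Fin n => bell η (j : ℕ) (i : ℕ) x) j j
      = (deriv η x) ^ (j : ℕ) := fun j => bell_diag η (j : ℕ) x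
  rw [Finset.prod_congr rfl (fun j _ => this j), Finset.prod_pow_eq_pow_sum,
    Fin.sum_univ_eq_sum_range (fun i => i) n, Finset.sum_range_id]
end

section
/- Let n ≥ 1 and let f_1, …, f_n : ℝ → ℝ be smooth functions. For each j define F_j(x) = W[f_1, …, f_{j-1}, f_{j+1}, …, f_n](x) (the Wronskian of the family with f_j omitted). Then W[F_1, F_2, …, F_n](x) = (-1)^{n(n-1)/2} · ( W[f_1, f_2, …, f_n](x) )^{n-1} for every x ∈ ℝ. -/
open Matrix Finset Equiv MvPolynomial

set_option linter.unusedSectionVars false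
set_option linter.unnecessarySeqFocus false




section DerDet

variable {A : Type*} [CommRing A] [Algebra ℝ A] (D : Derivation ℝ A A)

lemma derivation_finset_prod {ι : Type*} [DecidableEq ι]
    (s : Finset ι) (g : ι → A) :
    D (∏ i ∈ s, g i) = ∑ i ∈ s, (∏ j ∈ s.erase i, g j) * D (g i) := by
  induction s using Finset.induction_on with
  | empty => simp
  | @insert a s ha ih =>
    rw [Finset.prod_insert ha, Derivation.leibniz, smul_eq_mul, smul_eq_mul, ih,
      Finset.sum_insert ha, Finset.erase_insert ha, Finset.mul_sum]
    rw [add_comm]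
    congr 1
    refine Finset.sum_congr rfl fun i hi => ?_
    rw [Finset.erase_insert_of_ne (ne_of_mem_of_not_mem hi ha).symm,
      Finset.prod_insert (fun h => ha (Finset.mem_of_mem_erase h))]
    ring

lemma derivation_det_col {p : ℕ} (N : Matrix (Fin p) (Fin p) A) :
    D N.det = ∑ c, (N.updateCol c (fun r => D (N r c))).det := by
  have hz : ∀ (z : ℤˣ) (x : A), D ((z : ℤ) * x) = (z : ℤ) * D x := by
    intro z x
    rw [← zsmul_eq_mul, map_zsmul, zsmul_eq_mul]
  rw [Matrix.det_apply']
  rw [map_sum]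
  have h1 : ∀ σ : Equiv.Perm (Fin p),
      D (Equiv.Perm.sign σ * ∏ i, N (σ i) i)
        = ∑ c, Equiv.Perm.sign σ * ((∏ j ∈ Finset.univ.erase c, N (σ j) j) * D (N (σ c) c)) := by
    intro σ
    rw [hz, derivation_finset_prod, Finset.mul_sum]
  rw [Finset.sum_congr rfl fun σ _ => h1 σ, Finset.sum_comm]
  refine Finset.sum_congr rfl fun c _ => ?_
  rw [Matrix.det_apply']
  refine Finset.sum_congr rfl fun σ _ => ?_
  have h2 : ∏ i, (N.updateCol c fun r => D (N r c)) (σ i) i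
      = D (N (σ c) c) * ∏ j ∈ Finset.univ.erase c, N (σ j) j := by
    rw [← Finset.mul_prod_erase Finset.univ _ (Finset.mem_univ c)]
    congr 1
    · simp [Matrix.updateCol_apply]
    · refine Finset.prod_congr rfl fun j hj => ?_
      rw [Matrix.updateCol_apply, if_neg (Finset.ne_of_mem_erase hj)]
  rw [h2]; ring

lemma derivation_det_row {p : ℕ} (M : Matrix (Fin p) (Fin p) A) :
    D M.det = ∑ a, (M.updateRow a (fun k => D (M a k))).det := by
  rw [← Matrix.det_transpose M, derivation_det_col D Mᵀ]
  refine Finset.sum_congr rfl fun a _ => ?_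
  rw [← Matrix.det_transpose (M.updateRow a fun k => D (M a k)), Matrix.updateCol_transpose]
  rfl

lemma det_updateRow_finset_sum {p : ℕ} (M : Matrix (Fin p) (Fin p) A) (a : Fin p)
    {ι : Type*} [DecidableEq ι] (s : Finset ι) (c : ι → A) (v : ι → Fin p → A) :
    (M.updateRow a (∑ i ∈ s, c i • v i)).det = ∑ i ∈ s, c i * (M.updateRow a (v i)).det := by
  induction s using Finset.induction_on with
  | empty =>
    simp only [Finset.sum_empty]
    exact Matrix.det_eq_zero_of_row_eq_zero a (by simp)
  | @insert b s hb ih =>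
    rw [Finset.sum_insert hb, Finset.sum_insert hb, Matrix.det_updateRow_add,
      Matrix.det_updateRow_smul, ih]

end DerDet

lemma sign_revPerm : ∀ n : ℕ, Equiv.Perm.sign (Fin.revPerm : Equiv.Perm (Fin n)) = (-1) ^ (n * (n-1) / 2) := by
  intro n
  induction n with
  | zero =>
    decide
  | succ n ih =>
    have key : (Fin.revPerm : Equiv.Perm (Fin (n+1)))
        = (Equiv.Perm.decomposeFin.symm (0, Fin.revPerm)) * finRotate (n+1) := by
      ext i
      by_cases hi : i = Fin.last n
      · subst hi
        rw [Equiv.Perm.mul_apply, finRotate_last, Equiv.Perm.decomposeFin_symm_apply_zero,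
          Fin.revPerm_apply, Fin.rev_last]
      · have hlt : (i : ℕ) < n := by
          have := i.isLt; rcases Nat.lt_succ_iff_lt_or_eq.mp this with h | h
          · exact h
          · exact absurd (Fin.ext h : i = Fin.last n) hi
        have h1 : finRotate (n+1) i = Fin.succ ⟨i.val, hlt⟩ := by
          apply Fin.ext
          rw [coe_finRotate, if_neg hi, Fin.val_succ]
        rw [Equiv.Perm.mul_apply, h1, Equiv.Perm.decomposeFin_symm_apply_succ,
          Equiv.swap_self, Equiv.refl_apply]
        simp only [Fin.revPerm_apply, Fin.ext_iff, Fin.val_succ, Fin.val_rev]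
        omega
    rw [key, _root_.map_mul, Equiv.Perm.decomposeFin.symm_sign, if_pos rfl, one_mul, ih,
      sign_finRotate, ← pow_add]
    congr 1
    have e2 : n * (n - 1) + n = n * n := by
      cases n with
      | zero => simp
      | succ k => simp only [Nat.succ_sub_one]; ring
    obtain ⟨k, hk⟩ := Nat.even_mul_succ_self n
    have e1 : (n+1) * (n + 1 - 1) = n * (n+1) := by
      simp only [Nat.succ_sub_one]; ring
    have e3 : n * (n+1) = n * n + n := by ring
    omega

namespace WronskAux

abbrev RR (m : ℕ) : Type := MvPolynomial (ℕ × Fin (m+1)) ℝ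

noncomputable def DD (m : ℕ) : Derivation ℝ (RR m) (RR m) :=
  MvPolynomial.mkDerivation ℝ (fun v : ℕ × Fin (m+1) => X (v.1 + 1, v.2))

@[simp] lemma DD_X {m : ℕ} (v : ℕ × Fin (m+1)) : DD m (X v) = X (v.1 + 1, v.2) :=
  mkDerivation_X _ _ _

def Fn (q a : ℕ) : ℕ := if a < q then a else a + 1

variable (m : ℕ)

noncomputable def Mp : Matrix (Fin (m+1)) (Fin (m+1)) (RR m) := fun i k => X ((i : ℕ), k)
noncomputable def Wp : RR m := (Mp m).det
noncomputable def Bm (q : ℕ) (j : Fin (m+1)) : Matrix (Fin m) (Fin m) (RR m) :=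
  fun a b => X (Fn q (a : ℕ), j.succAbove b)
noncomputable def Jp (q : ℕ) (j : Fin (m+1)) : RR m := (Bm m q j).det
noncomputable def FpM (j : Fin (m+1)) : Matrix (Fin m) (Fin m) (RR m) :=
  fun a b => X ((a : ℕ), j.succAbove b)
noncomputable def Fp (j : Fin (m+1)) : RR m := (FpM m j).det
noncomputable def Gp (i : ℕ) (j : Fin (m+1)) : RR m := (fun p => DD m p)^[i] (Fp m j)
noncomputable def gam (s : Fin (m+1)) : RR m := ∑ t, X ((m+1 : ℕ), t) * (Mp m).adjugate t s

lemma Bm_top (j : Fin (m+1)) : Bm m m j = FpM m j := by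
  funext a b
  simp only [Bm, FpM, Fn, if_pos a.isLt]

lemma Jp_top (j : Fin (m+1)) : Jp m m j = Fp m j := by rw [Jp, Bm_top, Fp]

lemma row_id (k : Fin (m+1)) :
    ∑ s, gam m s * X ((s : ℕ), k) = Wp m * X ((m+1 : ℕ), k) := by
  have h1 : ∀ s : Fin (m+1), gam m s * X ((s : ℕ), k)
      = ∑ t, X ((m+1 : ℕ), t) * ((Mp m).adjugate t s * Mp m s k) := by
    intro s
    rw [gam, Finset.sum_mul]
    refine Finset.sum_congr rfl fun t _ => ?_
    rw [mul_assoc]; rfl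
  rw [Finset.sum_congr rfl fun s _ => h1 s, Finset.sum_comm]
  have h2 : ∀ t, ∑ s, X ((m+1 : ℕ), t) * ((Mp m).adjugate t s * Mp m s k)
      = X ((m+1 : ℕ), t) * (if t = k then Wp m else 0) := by
    intro t
    rw [← Finset.mul_sum]
    congr 1
    rw [← Matrix.mul_apply, Matrix.adjugate_mul, Matrix.smul_apply, Matrix.one_apply]
    split <;> simp [Wp]
  rw [Finset.sum_congr rfl fun t _ => h2 t]
  rw [Finset.sum_congr rfl fun t _ => (by rw [mul_ite, mul_zero] :
    X ((m+1:ℕ), t) * (if t = k then Wp m else 0) = if t = k then X ((m+1:ℕ), t) * Wp m else 0),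
    Finset.sum_ite_eq' Finset.univ k (fun t => X ((m+1:ℕ), t) * Wp m)]
  rw [if_pos (Finset.mem_univ k), mul_comm]

lemma D_Jp (q : ℕ) (j : Fin (m+1)) :
    DD m (Jp m q j) = ∑ a : Fin m,
      ((Bm m q j).updateRow a (fun b => X (Fn q (a : ℕ) + 1, j.succAbove b))).det := by
  rw [Jp, derivation_det_row]
  refine Finset.sum_congr rfl fun a _ => ?_
  congr 1
  funext b
  simp only [Bm, DD_X]

lemma dup_term (q : ℕ) (j : Fin (m+1)) (a : Fin m) (r : ℕ) (a' : Fin m) (hne : a' ≠ a)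
    (h : Fn q (a' : ℕ) = r) :
    ((Bm m q j).updateRow a (fun b => X (r, j.succAbove b))).det = 0 := by
  refine Matrix.det_zero_of_row_eq hne.symm ?_
  rw [Matrix.updateRow_self, Matrix.updateRow_ne hne]
  funext b
  simp only [Bm, h]

lemma updateRow_eq_Bm (q q' : ℕ) (j : Fin (m+1)) (a : Fin m)
    (h1 : Fn q' (a : ℕ) = Fn q (a : ℕ) + 1)
    (h2 : ∀ a' : Fin m, a' ≠ a → Fn q' (a' : ℕ) = Fn q (a' : ℕ)) :
    (Bm m q j).updateRow a (fun b => X (Fn q (a : ℕ) + 1, j.succAbove b)) = Bm m q' j := by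
  funext a' b
  by_cases h : a' = a
  · subst h
    rw [Matrix.updateRow_self]
    simp only [Bm, h1]
  · rw [Matrix.updateRow_ne h]
    simp only [Bm, h2 a' h]

lemma Dstep_top (hm : 1 ≤ m) (j : Fin (m+1)) :
    DD m (Jp m m j) = Jp m (m-1) j := by
  rw [D_Jp]
  have key : ∀ a : Fin m,
      ((Bm m m j).updateRow a (fun b => X (Fn m (a : ℕ) + 1, j.succAbove b))).det
      = if a = (⟨m-1, by omega⟩ : Fin m) then Jp m (m-1) j else 0 := by
    intro a
    by_cases ha : a = (⟨m-1, by omega⟩ : Fin m)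
    · rw [if_pos ha, Jp]
      subst ha
      rw [updateRow_eq_Bm]
      · simp only [Fn]
        split_ifs <;> omega
      · intro a' ha'
        have hv : (a' : ℕ) ≠ m - 1 := fun h => ha' (Fin.ext h)
        have := a'.isLt
        simp only [Fn]
        split_ifs <;> omega
    · rw [if_neg ha]
      have hv : (a : ℕ) < m - 1 := by
        have := a.isLt
        have : (a:ℕ) ≠ m - 1 := fun h => ha (Fin.ext h)
        omega
      refine dup_term m m j a _ ⟨(a:ℕ)+1, by omega⟩ (by intro h; have : (a:ℕ)+1 = (a:ℕ) := congrArg Fin.val h; omega) ?_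
      simp only [Fn]
      split_ifs <;> omega
  rw [Finset.sum_congr rfl fun a _ => key a,
    Finset.sum_ite_eq' Finset.univ _ (fun _ => Jp m (m-1) j), if_pos (Finset.mem_univ _)]

end WronskAux

namespace WronskAux

variable {m : ℕ}

lemma Fn_le (q : ℕ) (a : Fin m) (h : (a:ℕ) ≠ m - 1) : Fn q (a:ℕ) ≤ m - 1 := by
  have := a.isLt
  simp only [Fn]; split_ifs <;> omega

lemma perm_term (q : ℕ) (hq1 : 1 ≤ q) (hq2 : q ≤ m - 1) :
    ∃ ε : RR m, ∀ j : Fin (m+1),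
      ((Bm m q j).updateRow ⟨m-1, by omega⟩ (fun b => X (q, j.succAbove b))).det
        = ε * Fp m j := by
  have hm : 2 ≤ m := by omega
  have hq : q < m := by omega
  have hm1 : m - 1 < m := by omega
  let u : Fin m → Fin m := fun a =>
    ⟨if (a : ℕ) = m - 1 then q else min (Fn q (a:ℕ)) (m-1), by split_ifs <;> omega⟩
  have hu1 : ∀ a : Fin m, (a:ℕ) = m - 1 → (u a : ℕ) = q := by
    intro a ha
    show (if (a : ℕ) = m - 1 then q else min (Fn q (a:ℕ)) (m-1)) = q
    rw [if_pos ha]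
  have hu2 : ∀ a : Fin m, (a:ℕ) ≠ m - 1 → (u a : ℕ) = Fn q (a:ℕ) := by
    intro a ha
    show (if (a : ℕ) = m - 1 then q else min (Fn q (a:ℕ)) (m-1)) = Fn q (a:ℕ)
    rw [if_neg ha]
    exact min_eq_left (Fn_le q a ha)
  have hinj : Function.Injective u := by
    intro a a' h
    have ha := a.isLt; have ha' := a'.isLt
    have hv : (if (a : ℕ) = m - 1 then q else min (Fn q (a:ℕ)) (m-1))
        = (if (a' : ℕ) = m - 1 then q else min (Fn q (a':ℕ)) (m-1)) := congrArg Fin.val h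
    apply Fin.ext
    simp only [Fn] at hv
    split_ifs at hv <;> omega
  let π : Equiv.Perm (Fin m) := Equiv.ofBijective u (Finite.injective_iff_bijective.mp hinj)
  refine ⟨((Equiv.Perm.sign π : ℤ) : RR m), fun j => ?_⟩
  have hU : (Bm m q j).updateRow ⟨m-1, by omega⟩ (fun b => X (q, j.succAbove b))
      = (FpM m j).submatrix π id := by
    funext a b
    have hπ : π a = u a := rfl
    by_cases h : a = (⟨m-1, by omega⟩ : Fin m)
    · rw [h, Matrix.updateRow_self]
      simp only [Matrix.submatrix_apply, FpM, id]
      congr 2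
      exact (hu1 ⟨m-1, by omega⟩ rfl).symm
    · rw [Matrix.updateRow_ne h]
      simp only [Matrix.submatrix_apply, FpM, id, Bm]
      congr 2
      have hv : (a : ℕ) ≠ m - 1 := fun hh => h (Fin.ext hh)
      exact (hu2 a hv).symm
  rw [hU, Matrix.det_permute]
  rfl

lemma Dstep_mid (q : ℕ) (hq1 : 1 ≤ q) (hq2 : q ≤ m - 1) :
    ∃ ε : RR m, ∀ j : Fin (m+1),
      Wp m * DD m (Jp m q j) = Wp m * Jp m (q-1) j
        + gam m (Fin.last m) * Jp m q j + ε * Fp m j := by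
  obtain ⟨ε₀, hp⟩ := perm_term q hq1 hq2
  refine ⟨gam m ⟨q, by omega⟩ * ε₀, fun j => ?_⟩
  have hm2 : 2 ≤ m := by omega
  have h1 : DD m (Jp m q j) = Jp m (q-1) j
      + ((Bm m q j).updateRow ⟨m-1, by omega⟩ (fun b => X ((m+1 : ℕ), j.succAbove b))).det := by
    rw [D_Jp]
    have key : ∀ a : Fin m,
        ((Bm m q j).updateRow a (fun b => X (Fn q (a : ℕ) + 1, j.succAbove b))).det
        = (if a = (⟨q-1, by omega⟩ : Fin m) then Jp m (q-1) j else 0)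
          + (if a = (⟨m-1, by omega⟩ : Fin m) then
              ((Bm m q j).updateRow ⟨m-1, by omega⟩
                (fun b => X ((m+1:ℕ), j.succAbove b))).det else 0) := by
      intro a
      by_cases ha1 : a = (⟨q-1, by omega⟩ : Fin m)
      · have hav : (a : ℕ) = q - 1 := by rw [ha1]
        have hne : a ≠ (⟨m-1, by omega⟩ : Fin m) := by
          intro hh
          have : (a : ℕ) = m - 1 := by rw [hh]
          omega
        rw [if_pos ha1, if_neg hne, add_zero, Jp]
        rw [updateRow_eq_Bm]
        · rw [hav]
          simp only [Fn]
          split_ifs <;> omega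
        · intro a' ha'
          have hv : (a' : ℕ) ≠ q - 1 := by
            intro hh; exact ha' (by rw [ha1]; exact Fin.ext (by rw [hh]))
          have := a'.isLt
          simp only [Fn]
          split_ifs <;> omega
      · rw [if_neg ha1]
        by_cases ha2 : a = (⟨m-1, by omega⟩ : Fin m)
        · rw [if_pos ha2, zero_add]
          have hav : (a : ℕ) = m - 1 := by rw [ha2]
          have hrow : (fun b => (X (Fn q (a : ℕ) + 1, j.succAbove b) : RR m))
              = fun b => (X ((m+1:ℕ), j.succAbove b) : RR m) := by
            funext b
            congr 2
            rw [hav]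
            simp only [Fn]
            split_ifs <;> omega
          rw [hrow, ha2]
        · rw [if_neg ha2, add_zero]
          have hv1 : (a : ℕ) ≠ q - 1 := fun hh => ha1 (Fin.ext (by rw [hh]))
          have hv2 : (a : ℕ) ≠ m - 1 := fun hh => ha2 (Fin.ext (by rw [hh]))
          have := a.isLt
          refine dup_term m q j a _ ⟨(a:ℕ)+1, by omega⟩
            (by intro hh; have : (a:ℕ)+1 = (a:ℕ) := congrArg Fin.val hh; omega) ?_
          simp only [Fn]
          split_ifs <;> omega
    rw [Finset.sum_congr rfl fun a _ => key a, Finset.sum_add_distrib,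
      Finset.sum_ite_eq' Finset.univ _ (fun _ => Jp m (q-1) j),
      Finset.sum_ite_eq' Finset.univ _
        (fun _ => ((Bm m q j).updateRow ⟨m-1, by omega⟩
          (fun b => X ((m+1:ℕ), j.succAbove b))).det),
      if_pos (Finset.mem_univ _), if_pos (Finset.mem_univ _)]
  have h2 : Wp m * ((Bm m q j).updateRow ⟨m-1, by omega⟩
        (fun b => X ((m+1:ℕ), j.succAbove b))).det
      = gam m (Fin.last m) * Jp m q j + gam m ⟨q, by omega⟩ * (ε₀ * Fp m j) := by
    rw [← Matrix.det_updateRow_smul]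
    have h3 : (Wp m • fun b => (X ((m+1:ℕ), j.succAbove b) : RR m))
        = ∑ s : Fin (m+1), gam m s • fun b => (X ((s:ℕ), j.succAbove b) : RR m) := by
      funext b
      simp only [Pi.smul_apply, Finset.sum_apply, smul_eq_mul]
      exact (row_id m (j.succAbove b)).symm
    rw [h3, det_updateRow_finset_sum]
    have key2 : ∀ s : Fin (m+1),
        gam m s * ((Bm m q j).updateRow ⟨m-1, by omega⟩
          (fun b => X ((s:ℕ), j.succAbove b))).det
        = (if s = Fin.last m then gam m s * Jp m q j else 0)
          + (if s = (⟨q, by omega⟩ : Fin (m+1)) then gam m s * (ε₀ * Fp m j) else 0) := by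
      intro s
      by_cases hs1 : s = Fin.last m
      · have hsv : (s : ℕ) = m := by rw [hs1]; rfl
        have hne : s ≠ (⟨q, by omega⟩ : Fin (m+1)) := by
          intro hh
          have : (s : ℕ) = q := by rw [hh]
          omega
        rw [if_pos hs1, if_neg hne, add_zero]
        congr 1
        have hrow : (fun b => (X (((s : Fin (m+1)):ℕ), j.succAbove b) : RR m))
            = (Bm m q j) ⟨m-1, by omega⟩ := by
          funext b
          simp only [Bm, Fn]
          rw [hsv]
          split_ifs <;> (congr 2 <;> omega)
        rw [hrow, Matrix.updateRow_eq_self, Jp]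
      · rw [if_neg hs1]
        by_cases hs2 : s = (⟨q, by omega⟩ : Fin (m+1))
        · rw [if_pos hs2, zero_add]
          have hsv : (s : ℕ) = q := by rw [hs2]
          have hrow : (fun b => (X (((s : Fin (m+1)):ℕ), j.succAbove b) : RR m))
              = (fun b => (X (q, j.succAbove b) : RR m)) := by
            funext b; rw [hsv]
          rw [hrow, hp j]
        · rw [if_neg hs2, add_zero]
          have hv1 : (s : ℕ) ≠ m := by
            intro hh; exact hs1 (Fin.ext (by rw [hh]; rfl))
          have hv2 : (s : ℕ) ≠ q := fun hh => hs2 (Fin.ext (by rw [hh]))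
          have hsl := s.isLt
          rw [mul_eq_zero]; right
          rcases Nat.lt_or_ge (s:ℕ) q with hlt | hge
          · refine dup_term m q j ⟨m-1, by omega⟩ _ ⟨(s:ℕ), by omega⟩
              (by intro hh; have : (s:ℕ) = m-1 := congrArg Fin.val hh; omega) ?_
            simp only [Fn]
            split_ifs <;> omega
          · refine dup_term m q j ⟨m-1, by omega⟩ _ ⟨(s:ℕ)-1, by omega⟩
              (by intro hh; have : (s:ℕ)-1 = m-1 := congrArg Fin.val hh; omega) ?_
            simp only [Fn]
            split_ifs <;> omega
    rw [Finset.sum_congr rfl fun s _ => key2 s, Finset.sum_add_distrib,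
      Finset.sum_ite_eq' Finset.univ (Fin.last m) (fun s => gam m s * Jp m q j),
      Finset.sum_ite_eq' Finset.univ (⟨q, by omega⟩ : Fin (m+1))
        (fun s => gam m s * (ε₀ * Fp m j)),
      if_pos (Finset.mem_univ _), if_pos (Finset.mem_univ _)]
  rw [h1, mul_add, h2]
  ring

end WronskAux

namespace WronskAux

variable {m : ℕ}

lemma D_mul (a b : RR m) : DD m (a * b) = a * DD m b + b * DD m a := by
  rw [Derivation.leibniz, smul_eq_mul, smul_eq_mul]

lemma D_sum {ι : Type*} (s : Finset ι) (g : ι → RR m) :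
    DD m (∑ i ∈ s, g i) = ∑ i ∈ s, DD m (g i) :=
  map_sum (DD m).toLinearMap g s

lemma hDG (i : ℕ) (j : Fin (m+1)) : DD m (Gp m i j) = Gp m (i+1) j :=
  (Function.iterate_succ_apply' _ _ _).symm

lemma Gp_zero (j : Fin (m+1)) : Gp m 0 j = Fp m j := rfl

lemma claim (i : ℕ) (hi : i ≤ m) : ∃ N : ℕ, ∃ e : ℕ → RR m, ∀ j : Fin (m+1),
    Wp m ^ N * Gp m i j = Wp m ^ N * Jp m (m - i) j
      + ∑ l ∈ Finset.range i, e l * Gp m l j := by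
  induction i with
  | zero =>
    refine ⟨0, fun _ => 0, fun j => ?_⟩
    rw [pow_zero, one_mul, one_mul, Nat.sub_zero, Jp_top, Finset.range_zero,
      Finset.sum_empty, add_zero, Gp_zero]
  | succ i ih =>
    have hi' : i ≤ m := by omega
    obtain ⟨N, e, he⟩ := ih hi'
    by_cases hi0 : i = 0
    · subst hi0
      refine ⟨0, fun _ => 0, fun j => ?_⟩
      have h1 : Gp m 1 j = DD m (Gp m 0 j) := (hDG 0 j).symm
      rw [pow_zero, one_mul, one_mul, h1, Gp_zero, ← Jp_top, Dstep_top (m := m) (by omega) j]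
      simp
    · have hq1 : 1 ≤ m - i := by omega
      have hq2 : m - i ≤ m - 1 := by omega
      obtain ⟨ε, hε⟩ := Dstep_mid (m - i) hq1 hq2
      set q := m - i with hqdef
      set P := DD m (Wp m ^ N) with hP
      set γL := gam m (Fin.last m) with hγ
      set cc := Wp m * P + Wp m ^ N * γL with hcc
      set e' : ℕ → RR m := fun l =>
        (if l = i then Wp m ^(2*N) * γL else 0) + (if l = 0 then Wp m ^(2*N) * ε else 0)
        + (if l < i then Wp m ^(N+1) * DD m (e l) - cc * e l else 0)
        + (if 1 ≤ l ∧ l ≤ i then Wp m ^(N+1) * e (l-1) else 0) with he'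
      refine ⟨2*N+1, e', fun j => ?_⟩
      have eq3 := he j
      have eq2 := hε j
      rw [show Fp m j = Gp m 0 j from rfl] at eq2
      have eq1 : P * Gp m i j + Wp m ^ N * Gp m (i+1) j
          = P * Jp m q j + Wp m ^ N * DD m (Jp m q j)
            + ((∑ l ∈ Finset.range i, DD m (e l) * Gp m l j)
              + (∑ l ∈ Finset.range i, e l * Gp m (l+1) j)) := by
        have h0 := congrArg (fun p : RR m => DD m p) eq3
        rw [map_add, D_mul, D_mul, D_sum] at h0
        have hsum : ∑ l ∈ Finset.range i, DD m (e l * Gp m l j)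
            = (∑ l ∈ Finset.range i, DD m (e l) * Gp m l j)
              + ∑ l ∈ Finset.range i, e l * Gp m (l+1) j := by
          rw [← Finset.sum_add_distrib]
          refine Finset.sum_congr rfl fun l _ => ?_
          rw [D_mul, hDG]; ring
        rw [hsum, hDG] at h0
        linear_combination h0
      -- sum expansion
      have hA1 : ∑ l ∈ Finset.range (i+1), (if l = i then Wp m ^(2*N) * γL else 0) * Gp m l j
          = Wp m ^(2*N) * γL * Gp m i j := by
        simp only [ite_mul, zero_mul]
        rw [Finset.sum_ite_eq' (Finset.range (i+1)) i (fun l => Wp m ^(2*N) * γL * Gp m l j),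
          if_pos (Finset.self_mem_range_succ i)]
      have hA2 : ∑ l ∈ Finset.range (i+1), (if l = 0 then Wp m ^(2*N) * ε else 0) * Gp m l j
          = Wp m ^(2*N) * ε * Gp m 0 j := by
        simp only [ite_mul, zero_mul]
        rw [Finset.sum_ite_eq' (Finset.range (i+1)) 0 (fun l => Wp m ^(2*N) * ε * Gp m l j),
          if_pos (by simp)]
      have hA3 : ∑ l ∈ Finset.range (i+1),
            (if l < i then Wp m ^(N+1) * DD m (e l) - cc * e l else 0) * Gp m l j
          = Wp m ^(N+1) * (∑ l ∈ Finset.range i, DD m (e l) * Gp m l j)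
            - cc * (∑ l ∈ Finset.range i, e l * Gp m l j) := by
        simp only [ite_mul, zero_mul]
        rw [← Finset.sum_subset (Finset.range_subset_range.mpr (by omega : i ≤ i + 1))
          (fun x _ hx => by rw [if_neg (by simpa using hx)])]
        rw [Finset.sum_congr rfl (fun l hl => if_pos (Finset.mem_range.mp hl))]
        rw [Finset.mul_sum, Finset.mul_sum, ← Finset.sum_sub_distrib]
        refine Finset.sum_congr rfl fun l _ => ?_
        ring
      have hA4 : ∑ l ∈ Finset.range (i+1),
            (if 1 ≤ l ∧ l ≤ i then Wp m ^(N+1) * e (l-1) else 0) * Gp m l j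
          = Wp m ^(N+1) * (∑ l ∈ Finset.range i, e l * Gp m (l+1) j) := by
        rw [Finset.sum_range_succ']
        rw [if_neg (by omega), zero_mul, add_zero, Finset.mul_sum]
        refine Finset.sum_congr rfl fun l hl => ?_
        have hl' := Finset.mem_range.mp hl
        rw [if_pos (by omega : 1 ≤ l + 1 ∧ l + 1 ≤ i), Nat.add_sub_cancel]
        ring
      have sumexp : ∑ l ∈ Finset.range (i+1), e' l * Gp m l j
          = Wp m ^(2*N) * γL * Gp m i j + Wp m ^(2*N) * ε * Gp m 0 j
            + (Wp m ^(N+1) * (∑ l ∈ Finset.range i, DD m (e l) * Gp m l j)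
              - cc * (∑ l ∈ Finset.range i, e l * Gp m l j))
            + Wp m ^(N+1) * (∑ l ∈ Finset.range i, e l * Gp m (l+1) j) := by
        rw [← hA1, ← hA2, ← hA3, ← hA4, ← Finset.sum_add_distrib, ← Finset.sum_add_distrib,
          ← Finset.sum_add_distrib]
        refine Finset.sum_congr rfl fun l _ => ?_
        rw [he']
        ring
      have hqq : m - (i+1) = q - 1 := by omega
      rw [hqq, sumexp]
      linear_combination (Wp m ^(N+1)) * eq1 + (Wp m ^(2*N)) * eq2 - cc * eq3

end WronskAux

namespace WronskAux

variable {m : ℕ}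

lemma Wp_ne_zero : Wp m ≠ 0 := by
  intro h
  have h2 := congrArg
    (MvPolynomial.eval (fun v : ℕ × Fin (m+1) => if v.1 = (v.2 : ℕ) then (1:ℝ) else 0)) h
  rw [map_zero, Wp, RingHom.map_det] at h2
  have h3 : (MvPolynomial.eval
      (fun v : ℕ × Fin (m+1) => if v.1 = (v.2 : ℕ) then (1:ℝ) else 0)).mapMatrix (Mp m)
      = (1 : Matrix (Fin (m+1)) (Fin (m+1)) ℝ) := by
    ext i k
    simp only [RingHom.mapMatrix_apply, Matrix.map_apply, Mp, MvPolynomial.eval_X,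
      Matrix.one_apply, Fin.val_inj]
  rw [h3, Matrix.det_one] at h2
  exact one_ne_zero h2

lemma val_succAbove (r : Fin (m+1)) (a : Fin m) :
    ((r.succAbove a : Fin (m+1)) : ℕ) = Fn (r : ℕ) (a : ℕ) := by
  rw [Fn]
  by_cases hab : (a:ℕ) < (r:ℕ)
  · rw [if_pos hab, Fin.succAbove_of_castSucc_lt _ _ (by rwa [Fin.lt_def])]
    rfl
  · rw [if_neg hab, Fin.succAbove_of_le_castSucc _ _ (by rw [Fin.le_def]; simpa using hab)]
    rfl

lemma Jp_submatrix (r : Fin (m+1)) (j : Fin (m+1)) :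
    Jp m (r : ℕ) j = ((Mp m).submatrix r.succAbove j.succAbove).det := by
  rw [Jp]
  congr 1
  funext a b
  simp only [Bm, Matrix.submatrix_apply, Mp]
  rw [val_succAbove]

theorem poly_main : Matrix.det (fun i j : Fin (m+1) => Gp m (i : ℕ) j)
    = (-1 : RR m)^((m+1)*m/2) * Wp m ^ m := by
  classical
  have hclaim := fun i : Fin (m+1) => claim (m := m) (i : ℕ) (by omega)
  choose N e he using hclaim
  set Gmat : Matrix (Fin (m+1)) (Fin (m+1)) (RR m) := fun i j => Gp m (i:ℕ) j with hGmat
  set Jmat : Matrix (Fin (m+1)) (Fin (m+1)) (RR m) := fun i j => Jp m (m - (i:ℕ)) j with hJmat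
  set T : Matrix (Fin (m+1)) (Fin (m+1)) (RR m) := fun i l =>
    if l = i then Wp m ^ (N i) else if (l:ℕ) < (i:ℕ) then -(e i (l:ℕ)) else 0 with hT
  have hTG : T * Gmat = Matrix.diagonal (fun i => Wp m ^ (N i)) * Jmat := by
    funext i j
    rw [Matrix.mul_apply, Matrix.diagonal_mul]
    have hsplit : ∀ l : Fin (m+1), T i l * Gmat l j
        = (if l = i then Wp m ^ (N i) * Gp m (l:ℕ) j else 0)
          + (if (l:ℕ) < (i:ℕ) then -(e i (l:ℕ)) * Gp m (l:ℕ) j else 0) := by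
      intro l
      simp only [hT, hGmat]
      by_cases h1 : l = i
      · rw [if_pos h1, if_pos h1, if_neg (by rw [h1]; omega), add_zero]
      · rw [if_neg h1, if_neg h1, zero_add]
        by_cases h2 : (l:ℕ) < (i:ℕ)
        · rw [if_pos h2, if_pos h2]
        · rw [if_neg h2, if_neg h2, zero_mul]
    rw [Finset.sum_congr rfl (fun l _ => hsplit l), Finset.sum_add_distrib,
      Finset.sum_ite_eq' Finset.univ i (fun l => Wp m ^ (N i) * Gp m (l:ℕ) j),
      if_pos (Finset.mem_univ i)]
    have hsecond : ∑ l : Fin (m+1), (if (l:ℕ) < (i:ℕ) then -(e i (l:ℕ)) * Gp m (l:ℕ) j else 0)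
        = - ∑ l ∈ Finset.range (i:ℕ), e i l * Gp m l j := by
      rw [Fin.sum_univ_eq_sum_range
        (fun l : ℕ => if l < (i:ℕ) then -(e i l) * Gp m l j else 0) (m+1)]
      rw [← Finset.sum_subset (Finset.range_subset_range.mpr (by omega : (i:ℕ) ≤ m + 1))
        (fun x _ hx => by rw [if_neg (by simpa using hx)])]
      rw [Finset.sum_congr rfl (fun l hl => if_pos (Finset.mem_range.mp hl)),
        ← Finset.sum_neg_distrib]
      exact Finset.sum_congr rfl fun l _ => by ring
    rw [hsecond]
    simp only [hJmat]
    linear_combination he i j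
  have htri : T.BlockTriangular OrderDual.toDual := by
    intro i j hij
    have hij' : i < j := hij
    rw [hT]
    simp only []
    rw [if_neg (by exact fun h => absurd (h ▸ hij') (lt_irrefl _)),
      if_neg (by rw [Fin.lt_def] at hij'; omega)]
  have hdetT : T.det = ∏ i, Wp m ^ (N i) := by
    rw [Matrix.det_of_lowerTriangular T htri]
    exact Finset.prod_congr rfl fun i _ => if_pos rfl
  have hmul := congrArg Matrix.det hTG
  rw [Matrix.det_mul, Matrix.det_mul, hdetT, Matrix.det_diagonal] at hmul
  have hprodne : (∏ i, Wp m ^ (N i)) ≠ 0 :=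
    Finset.prod_ne_zero_iff.mpr fun i _ => pow_ne_zero _ Wp_ne_zero
  have hdetGJ : Gmat.det = Jmat.det := mul_left_cancel₀ hprodne hmul
  -- identify Jmat with permuted minor matrix
  set Am : Matrix (Fin (m+1)) (Fin (m+1)) (RR m) :=
    fun r j => ((Mp m).submatrix r.succAbove j.succAbove).det with hAm
  have hJmatA : Jmat = Am.submatrix (Fin.revPerm : Equiv.Perm (Fin (m+1))) id := by
    funext i j
    rw [Matrix.submatrix_apply, hJmat, hAm]
    simp only [Fin.revPerm_apply, id]
    rw [show m - (i:ℕ) = ((Fin.rev i : Fin (m+1)) : ℕ) by rw [Fin.val_rev]; omega]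
    exact Jp_submatrix (Fin.rev i) j
  have hdetJ : Jmat.det
      = ((Equiv.Perm.sign (Fin.revPerm : Equiv.Perm (Fin (m+1))) : ℤ) : RR m) * Am.det := by
    rw [hJmatA, Matrix.det_permute]
  -- det Am via adjugate
  have hAm2 : Am = Matrix.diagonal (fun r : Fin (m+1) => (-1 : RR m)^(r:ℕ))
      * ((Mp m).adjugate)ᵀ * Matrix.diagonal (fun j : Fin (m+1) => (-1 : RR m)^(j:ℕ)) := by
    funext r j
    rw [Matrix.mul_diagonal, Matrix.diagonal_mul, Matrix.transpose_apply,
      Matrix.adjugate_fin_succ_eq_det_submatrix, hAm]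
    rw [pow_add]
    have h1 : (-1 : RR m)^(r:ℕ) * (-1 : RR m)^(r:ℕ) = 1 := by
      rw [← pow_add, ← two_mul, pow_mul]; norm_num
    have h2 : (-1 : RR m)^(j:ℕ) * (-1 : RR m)^(j:ℕ) = 1 := by
      rw [← pow_add, ← two_mul, pow_mul]; norm_num
    linear_combination (((Mp m).submatrix r.succAbove j.succAbove).det
      * (-1 : RR m)^(j:ℕ) * (-1 : RR m)^(j:ℕ)) * h1.symm
      + ((Mp m).submatrix r.succAbove j.succAbove).det * h2.symm
  have hdetAm : Am.det = Wp m ^ m := by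
    rw [hAm2, Matrix.det_mul, Matrix.det_mul, Matrix.det_diagonal,
      Matrix.det_transpose, Matrix.det_adjugate]
    have hfac : ∀ r : Fin (m+1), (-1 : RR m)^(r:ℕ) * (-1 : RR m)^(r:ℕ) = 1 := by
      intro r; rw [← pow_add, ← two_mul, pow_mul]; norm_num
    have hp2 : (∏ r : Fin (m+1), (-1 : RR m)^(r:ℕ)) * (∏ r : Fin (m+1), (-1 : RR m)^(r:ℕ)) = 1 := by
      rw [← Finset.prod_mul_distrib, Finset.prod_congr rfl (fun r _ => hfac r)]
      exact Finset.prod_const_one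
    rw [Fintype.card_fin]
    have hm1 : m + 1 - 1 = m := rfl
    rw [hm1, show (Mp m).det = Wp m from rfl]
    linear_combination (Wp m ^ m) * hp2
  -- sign value
  have hsign : ((Equiv.Perm.sign (Fin.revPerm : Equiv.Perm (Fin (m+1))) : ℤ) : RR m)
      = (-1 : RR m)^((m+1)*m/2) := by
    rw [sign_revPerm (m+1)]
    have h1 : m + 1 - 1 = m := rfl
    rw [h1]
    push_cast
    norm_num
  rw [show Matrix.det (fun i j : Fin (m+1) => Gp m (i : ℕ) j) = Gmat.det from rfl,
    hdetGJ, hdetJ, hdetAm, hsign]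

end WronskAux


namespace WronskAux

variable {m : ℕ}

noncomputable def jets (f : Fin (m+1) → ℝ → ℝ) (x : ℝ) : ℕ × Fin (m+1) → ℝ :=
  fun v => iteratedDeriv v.1 (f v.2) x

lemma hasDerivAt_eval (f : Fin (m+1) → ℝ → ℝ) (hf : ∀ k, ContDiff ℝ (⊤ : ℕ∞) (f k))
    (p : RR m) (x : ℝ) :
    HasDerivAt (fun y => MvPolynomial.eval (jets f y) p)
      (MvPolynomial.eval (jets f x) (DD m p)) x := by
  induction p using MvPolynomial.induction_on with
  | C a =>
    have h0 : DD m (MvPolynomial.C a : RR m) = 0 := by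
      rw [show (MvPolynomial.C a : RR m) = algebraMap ℝ (RR m) a from rfl]
      exact Derivation.map_algebraMap (DD m) a
    simp only [MvPolynomial.eval_C, h0, map_zero]
    exact hasDerivAt_const x a
  | add p q hp hq =>
    simp only [map_add]
    exact hp.add hq
  | mul_X p v hp =>
    have hdiff : DifferentiableAt ℝ (iteratedDeriv v.1 (f v.2)) x :=
      ((hf v.2).differentiable_iteratedDeriv v.1 (by exact_mod_cast WithTop.coe_lt_top _)) x
    have hX : HasDerivAt (fun y => jets f y v) (jets f x (v.1+1, v.2)) x := by
      have h1 := hdiff.hasDerivAt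
      have h2 : deriv (iteratedDeriv v.1 (f v.2)) x = iteratedDeriv (v.1+1) (f v.2) x := by
        rw [iteratedDeriv_succ]
      rw [h2] at h1
      exact h1
    have hD : DD m (p * MvPolynomial.X v)
        = p * MvPolynomial.X (v.1+1, v.2) + MvPolynomial.X v * DD m p := by
      rw [D_mul, DD_X]
    have hmul : HasDerivAt (fun y => MvPolynomial.eval (jets f y) p * jets f y v)
        (MvPolynomial.eval (jets f x) (DD m p) * jets f x v
          + MvPolynomial.eval (jets f x) p * jets f x (v.1 + 1, v.2)) x := hp.mul hX
    simp only [_root_.map_mul, MvPolynomial.eval_X, hD, map_add]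
    convert hmul using 1
    ring

lemma iteratedDeriv_eval (f : Fin (m+1) → ℝ → ℝ) (hf : ∀ k, ContDiff ℝ (⊤ : ℕ∞) (f k))
    (p : RR m) (i : ℕ) :
    iteratedDeriv i (fun y => MvPolynomial.eval (jets f y) p)
      = fun y => MvPolynomial.eval (jets f y) ((fun r => DD m r)^[i] p) := by
  induction i generalizing p with
  | zero => rw [iteratedDeriv_zero, Function.iterate_zero_apply]
  | succ i ih =>
    rw [iteratedDeriv_succ', Function.iterate_succ_apply]
    rw [show deriv (fun y => MvPolynomial.eval (jets f y) p)
        = fun y => MvPolynomial.eval (jets f y) (DD m p) from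
      funext fun y => (hasDerivAt_eval f hf p y).deriv]
    exact ih (DD m p)

lemma eval_Fp (f : Fin (m+1) → ℝ → ℝ) (j : Fin (m+1)) (y : ℝ) :
    MvPolynomial.eval (jets f y) (Fp m j)
      = _root_.wronskian (fun k : Fin m => f (j.succAbove k)) y := by
  rw [Fp, RingHom.map_det, _root_.wronskian]
  congr 1
  funext a b
  simp only [RingHom.mapMatrix_apply, Matrix.map_apply, FpM, MvPolynomial.eval_X,
    Matrix.of_apply, jets]

lemma eval_Wp (f : Fin (m+1) → ℝ → ℝ) (y : ℝ) :
    MvPolynomial.eval (jets f y) (Wp m) = _root_.wronskian f y := by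
  rw [Wp, RingHom.map_det, _root_.wronskian]
  congr 1
  funext a b
  simp only [RingHom.mapMatrix_apply, Matrix.map_apply, Mp, MvPolynomial.eval_X,
    Matrix.of_apply, jets]

end WronskAux

/-- for smooth `f_1, …, f_n` with `n = m + 1 ≥ 1`, letting
`F_j = W[f_1, …, f_{j-1}, f_{j+1}, …, f_n]` (the Wronskian with `f_j` omitted),
one has `W[F_1, …, F_n](x) = (-1)^{n(n-1)/2} · ( W[f_1, …, f_n](x) )^{n-1}`. -/
theorem wronskian_of_cofactor_wronskians (m : ℕ) (f : Fin (m + 1) → ℝ → ℝ)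
    (hf : ∀ k, ContDiff ℝ (⊤ : ℕ∞) (f k))
    (F : Fin (m + 1) → ℝ → ℝ)
    (hF : ∀ j : Fin (m + 1), F j = wronskian (fun k : Fin m => f (j.succAbove k)))
    (x : ℝ) :
    wronskian F x = (-1) ^ ((m + 1) * m / 2) * (wronskian f x) ^ m := by
  open WronskAux in
  have hFj : ∀ j, F j = fun y => MvPolynomial.eval (jets f y) (Fp m j) := by
    intro j
    rw [hF j]
    funext y
    exact (eval_Fp f j y).symm
  have hentry : ∀ (i : Fin (m+1)) (k : Fin (m+1)),
      iteratedDeriv (i : ℕ) (F k) x = MvPolynomial.eval (jets f x) (Gp m (i : ℕ) k) := by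
    intro i k
    rw [hFj k, iteratedDeriv_eval f hf (Fp m k) (i : ℕ)]
    rfl
  rw [wronskian]
  have hmat : (Matrix.of fun i k : Fin (m+1) => iteratedDeriv (i : ℕ) (F k) x)
      = (MvPolynomial.eval (jets f x)).mapMatrix
          (Matrix.of fun i k : Fin (m+1) => WronskAux.Gp m (i : ℕ) k) := by
    funext i k
    simp only [Matrix.of_apply, RingHom.mapMatrix_apply, Matrix.map_apply]
    exact hentry i k
  rw [hmat, ← RingHom.map_det]
  rw [show Matrix.det (Matrix.of fun i k : Fin (m+1) => WronskAux.Gp m (i : ℕ) k)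
      = Matrix.det (fun i k : Fin (m+1) => WronskAux.Gp m (i : ℕ) k) from rfl]
  rw [WronskAux.poly_main, _root_.map_mul, map_pow, map_pow, map_neg, _root_.map_one,
    WronskAux.eval_Wp f x]
end

section
/- Let I ⊆ ℝ be an open interval, U : I → ℝ a function, and Ẽ, E real constants. Suppose φ̃ : I → ℝ is twice differentiable, nowhere vanishing on I, with -φ̃'' + Uφ̃ = Ẽφ̃ on I, and ψ : I → ℝ is twice differentiable with -ψ'' + Uψ = Eψ on I. Define ψ_new(x) = ψ'(x) - (φ̃'(x)/φ̃(x)) ψ(x). Then -( ψ_new'(x) + (φ̃'(x)/φ̃(x)) ψ_new(x) ) = (E - Ẽ) ψ(x) for all x ∈ I. -/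
/-!
Write `w = φ̃'/φ̃`, so that `Â = d/dx - w` and `Â† = -(d/dx + w)`. Expanding,
`Â†Âψ = -ψ'' + (w' + w²)ψ`, and the logarithmic derivative satisfies the Riccati identity
`w' + w² = φ̃''/φ̃ = U - Ẽ` by the seed equation. Hence `Â†Âψ = -ψ'' + Uψ - Ẽψ = (E - Ẽ)ψ`.
-/

variable {𝕜 : Type*} [NontriviallyNormedField 𝕜]

theorem deriv_deriv_div_self_add_sq {φ : 𝕜 → 𝕜} {x : 𝕜} (hφ : DifferentiableAt 𝕜 φ x)
    (hφ' : DifferentiableAt 𝕜 (deriv φ) x) (hφ0 : φ x ≠ 0) :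
    deriv (fun y => deriv φ y / φ y) x + (deriv φ x / φ x) ^ 2
      = deriv (deriv φ) x / φ x := by
  rw [(hφ'.hasDerivAt.fun_div hφ.hasDerivAt hφ0).deriv]
  field_simp
  ring

theorem neg_deriv_sub_mul_add_mul {w ψ : 𝕜 → 𝕜} {x : 𝕜} (hw : DifferentiableAt 𝕜 w x)
    (hψ : DifferentiableAt 𝕜 ψ x) (hψ' : DifferentiableAt 𝕜 (deriv ψ) x) :
    -(deriv (fun y => deriv ψ y - w y * ψ y) x + w x * (deriv ψ x - w x * ψ x))
      = -deriv (deriv ψ) x + (deriv w x + w x ^ 2) * ψ x := by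
  rw [(hψ'.hasDerivAt.fun_sub (hw.hasDerivAt.fun_mul hψ.hasDerivAt)).deriv]
  ring

/-- in the Darboux transformation of `H = -d²/dx² + U(x)` on the open
interval `I = (a,b)` with nowhere-vanishing, twice differentiable seed solution `φ̃`
(`Hφ̃ = Ẽφ̃` on `I`) and a twice differentiable solution `ψ` of `Hψ = Eψ` on `I`,
setting `ψ_new = ψ' - (φ̃'/φ̃)ψ = Âψ`, the adjoint operator
`Â† = -(d/dx + φ̃'/φ̃)` satisfies `Â†ψ_new = (E - Ẽ)ψ` on `I`. -/
theorem darboux_adjoint_relation (a b : ℝ) (U : ℝ → ℝ) (Et E : ℝ) (φ ψ : ℝ → ℝ)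
    (hφ1 : ∀ x ∈ Set.Ioo a b, DifferentiableAt ℝ φ x)
    (hφ2 : ∀ x ∈ Set.Ioo a b, DifferentiableAt ℝ (deriv φ) x)
    (hφ0 : ∀ x ∈ Set.Ioo a b, φ x ≠ 0)
    (hφeq : ∀ x ∈ Set.Ioo a b, -(deriv (deriv φ) x) + U x * φ x = Et * φ x)
    (hψ1 : ∀ x ∈ Set.Ioo a b, DifferentiableAt ℝ ψ x)
    (hψ2 : ∀ x ∈ Set.Ioo a b, DifferentiableAt ℝ (deriv ψ) x)
    (hψeq : ∀ x ∈ Set.Ioo a b, -(deriv (deriv ψ) x) + U x * ψ x = E * ψ x) :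
    ∀ x ∈ Set.Ioo a b,
      -(deriv (fun y => deriv ψ y - (deriv φ y / φ y) * ψ y) x
          + (deriv φ x / φ x) * (deriv ψ x - (deriv φ x / φ x) * ψ x))
      = (E - Et) * ψ x := by
  intro x hx
  have hw : DifferentiableAt ℝ (fun y => deriv φ y / φ y) x :=
    (hφ2 x hx).div (hφ1 x hx) (hφ0 x hx)
  have hseed : deriv (deriv φ) x / φ x = U x - Et := by
    rw [div_eq_iff (hφ0 x hx)]
    linear_combination -hφeq x hx
  rw [neg_deriv_sub_mul_add_mul hw (hψ1 x hx) (hψ2 x hx),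
    deriv_deriv_div_self_add_sq (hφ1 x hx) (hφ2 x hx) (hφ0 x hx), hseed]
  linear_combination hψeq x hx
end

section
/- Let (P_n)_{n≥0} be a sequence of real polynomials with deg P_n = n for every n, with the convention P_{-1} = 0. Suppose there are real sequences (A_n)_{n≥0}, (B_n)_{n≥0}, (C_n)_{n≥0} such that x·P_n(x) = A_n P_{n+1}(x) + B_n P_n(x) + C_n P_{n-1}(x) for all n ≥ 0, and real constants c_{n,k} (for n ≥ 1, 1 ≤ k ≤ n) such that P_n'(x) = Σ_{k=1}^{n} c_{n,k} P_{n-k}(x) for all n ≥ 1. Extend the conventions by A_{-1} = 0 and c_{m,j} = 0 whenever j ≤ 0 or j > m. Then for every n ≥ 1 and every k with 1 ≤ k ≤ n, the constant b_{n,k} := A_n c_{n+1,k+1} - A_{n-k-1} c_{n,k+1} + (B_n - B_{n-k}) c_{n,k} + C_n c_{n-1,k-1} - C_{n-k+1} c_{n,k-1} equals 0. -/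
/-!
Differentiating the three-term recurrence gives
`P_n + X P_n' = A_n P_{n+1}' + B_n P_n' + C_n P_{n-1}'`. Since `deg P_m = m`, the `P_m` form a
basis of the polynomials, and we compare coefficients of `P_{n-k}` on both sides. The coefficient
of `P_i` in `P_m'` is `c_{m,m-i}`, and by the recurrence, multiplication by `X` acts on
coefficients through the transposed Jacobi matrix: the `P_i`-coefficient of `X p` is
`A_{i-1} p_{i-1} + B_i p_i + C_{i+1} p_{i+1}`. For `i = n - k` the comparison reads `b_{n,k} = 0`.
-/

open Polynomial

noncomputable section

variable {K : Type*} [Field K] {P : ℤ → K[X]}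
  (hPdeg : ∀ n : ℤ, 0 ≤ n → (P n).degree = (n.toNat : WithBot ℕ))

def sequenceOfDegree : Polynomial.Sequence K where
  elems' i := P i
  degree_eq' i := by simpa using hPdeg i (Int.natCast_nonneg i)

def basisOfDegree : Module.Basis ℕ K K[X] :=
  (sequenceOfDegree hPdeg).basis fun i =>
    isUnit_iff_ne_zero.mpr (leadingCoeff_ne_zero.mpr ((sequenceOfDegree hPdeg).ne_zero i))

theorem basisOfDegree_apply (j : ℕ) : basisOfDegree hPdeg j = P j := by
  simp [basisOfDegree, sequenceOfDegree]

/-- Coordinates in the basis `(P m)_{m ≥ 0}`, indexed by `ℤ`, zero at negative indices. -/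
def expansion : K[X] →ₗ[K] ℤ →₀ K :=
  Finsupp.lmapDomain K K (Nat.cast : ℕ → ℤ) ∘ₗ (basisOfDegree hPdeg).repr

theorem expansion_eq_single {m : ℤ} (hm : 0 ≤ m) :
    expansion hPdeg (P m) = Finsupp.single m 1 := by
  lift m to ℕ using hm
  simp [expansion, ← basisOfDegree_apply hPdeg]

theorem expansion_apply_of_neg (p : K[X]) {i : ℤ} (hi : i < 0) : expansion hPdeg p i = 0 := by
  simp only [expansion, LinearMap.coe_comp, Function.comp_apply, Finsupp.lmapDomain_apply]
  exact Finsupp.mapDomain_of_notMem_range _ _ (by rintro ⟨j, rfl⟩; omega)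

theorem expansion_C_mul (a : K) (p : K[X]) :
    expansion hPdeg (C a * p) = a • expansion hPdeg p := by
  rw [C_mul', map_smul]

theorem expansion_apply_eq_ite (hPneg : ∀ n : ℤ, n < 0 → P n = 0) (m : ℤ) {i : ℤ}
    (hi : 0 ≤ i) :
    expansion hPdeg (P m) i = if m = i then 1 else 0 := by
  rcases lt_or_ge m 0 with hm | hm
  · rw [hPneg m hm, map_zero, if_neg (by omega)]
    rfl
  · rw [expansion_eq_single hPdeg hm, Finsupp.single_apply]

theorem expansion_X_mul (hPneg : ∀ n : ℤ, n < 0 → P n = 0) {A B Cc : ℤ → K}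
    (hrec : ∀ n : ℤ, 0 ≤ n →
      X * P n = C (A n) * P (n + 1) + C (B n) * P n + C (Cc n) * P (n - 1))
    (p : K[X]) {i : ℤ} (hi : 0 ≤ i) :
    expansion hPdeg (X * p) i = A (i - 1) * expansion hPdeg p (i - 1) + B i * expansion hPdeg p i
      + Cc (i + 1) * expansion hPdeg p (i + 1) := by
  let lhs : K[X] →ₗ[K] K := Finsupp.lapply i ∘ₗ expansion hPdeg ∘ₗ LinearMap.mulLeft K X
  let rhs : K[X] →ₗ[K] K := A (i - 1) • (Finsupp.lapply (i - 1) ∘ₗ expansion hPdeg)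
    + B i • (Finsupp.lapply i ∘ₗ expansion hPdeg)
    + Cc (i + 1) • (Finsupp.lapply (i + 1) ∘ₗ expansion hPdeg)
  suffices lhs = rhs from LinearMap.congr_fun this p
  refine (basisOfDegree hPdeg).ext fun j => ?_
  simp only [lhs, rhs, basisOfDegree_apply, LinearMap.comp_apply, LinearMap.add_apply,
    LinearMap.smul_apply, LinearMap.mulLeft_apply, Finsupp.lapply_apply, smul_eq_mul,
    hrec j (Int.natCast_nonneg j), map_add, expansion_C_mul, Finsupp.smul_apply,
    expansion_apply_eq_ite hPdeg hPneg _ hi, expansion_eq_single hPdeg (Int.natCast_nonneg j),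
    Finsupp.single_apply]
  split_ifs <;> subst_vars <;> first | omega | ring_nf

theorem expansion_derivative (hPneg : ∀ n : ℤ, n < 0 → P n = 0) {c : ℤ → ℤ → K}
    (hc : ∀ m k : ℤ, k ≤ 0 ∨ m < k → c m k = 0)
    (hder : ∀ n : ℤ, 1 ≤ n →
      derivative (P n) = ∑ k ∈ Finset.Icc (1 : ℤ) n, C (c n k) * P (n - k))
    (m i : ℤ) : expansion hPdeg (derivative (P m)) i = c m (m - i) := by
  rcases lt_or_ge i 0 with hi | hi
  · rw [expansion_apply_of_neg hPdeg _ hi, hc _ _ (by omega)]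
  rcases lt_trichotomy m 0 with hm | rfl | hm
  · rw [hPneg m hm, derivative_zero, map_zero, Finsupp.coe_zero, Pi.zero_apply,
      hc _ _ (by omega)]
  · have : (P 0).natDegree = 0 := natDegree_eq_of_degree_eq_some (hPdeg 0 le_rfl)
    rw [derivative_of_natDegree_zero this, map_zero, Finsupp.coe_zero, Pi.zero_apply,
      hc _ _ (by omega)]
  rw [hder m hm, map_sum, Finsupp.finsetSum_apply, Finset.sum_eq_single (m - i)]
  · rw [expansion_C_mul, sub_sub_cancel, expansion_eq_single hPdeg hi]
    simp
  · intro k hk hki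
    rw [Finset.mem_Icc] at hk
    rw [expansion_C_mul, expansion_eq_single hPdeg (by omega), Finsupp.smul_apply,
      Finsupp.single_eq_of_ne (by omega), smul_zero]
  · intro hi'
    rw [hc m (m - i) (by simp only [Finset.mem_Icc] at hi'; omega), map_zero, zero_mul, map_zero,
      Finsupp.coe_zero, Pi.zero_apply]

end

theorem orthopoly_bnk_vanish_general (P : ℤ → Polynomial ℝ)
    (hPneg : ∀ n : ℤ, n < 0 → P n = 0)
    (hPdeg : ∀ n : ℤ, 0 ≤ n → (P n).degree = (n.toNat : WithBot ℕ))
    (A B Cc : ℤ → ℝ)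
    (c : ℤ → ℤ → ℝ) (hc : ∀ m k : ℤ, k ≤ 0 ∨ m < k → c m k = 0)
    (hrec : ∀ n : ℤ, 0 ≤ n →
      Polynomial.X * P n =
        Polynomial.C (A n) * P (n + 1) + Polynomial.C (B n) * P n
          + Polynomial.C (Cc n) * P (n - 1))
    (hder : ∀ n : ℤ, 1 ≤ n →
      Polynomial.derivative (P n) =
        ∑ k ∈ Finset.Icc (1 : ℤ) n, Polynomial.C (c n k) * P (n - k)) :
    ∀ n k : ℤ, 1 ≤ n → 1 ≤ k → k ≤ n →
      A n * c (n + 1) (k + 1) - A (n - k - 1) * c n (k + 1)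
        + (B n - B (n - k)) * c n k
        + Cc n * c (n - 1) (k - 1) - Cc (n - k + 1) * c n (k - 1) = 0 := by
  intro n k hn hk hkn
  have hi : 0 ≤ n - k := by omega
  have hcoeff := congrArg (fun p => expansion hPdeg (derivative p) (n - k)) (hrec n (by omega))
  simp only [derivative_mul, derivative_X, derivative_C, zero_mul, zero_add, one_mul, map_add,
    expansion_C_mul, Finsupp.coe_add, Pi.add_apply, Finsupp.smul_apply, smul_eq_mul,
    expansion_X_mul hPdeg hPneg hrec _ hi, expansion_apply_eq_ite hPdeg hPneg _ hi,
    expansion_derivative hPdeg hPneg hc hder] at hcoeff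
  rw [if_neg (by omega)] at hcoeff
  ring_nf at hcoeff ⊢
  linear_combination -hcoeff

/-- for a family of ordinary orthogonal polynomials `P_n` (degree
exactly `n` for `n ≥ 0`, `P_n = 0` for `n < 0`) with three-term recurrence
`x P_n = A_n P_{n+1} + B_n P_n + C_n P_{n-1}` and derivative expansion
`P_n' = Σ_{k=1}^n c_{n,k} P_{n-k}`, extending the conventions by `A_{-1} = 0` and
`c_{m,j} = 0` for `j ≤ 0` or `j > m`, the constants
`b_{n,k} = A_n c_{n+1,k+1} - A_{n-k-1} c_{n,k+1} + (B_n - B_{n-k}) c_{n,k}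
          + C_n c_{n-1,k-1} - C_{n-k+1} c_{n,k-1}`
vanish for all `1 ≤ k ≤ n`. -/
theorem orthopoly_bnk_vanish (P : ℤ → Polynomial ℝ)
    (hPneg : ∀ n : ℤ, n < 0 → P n = 0)
    (hPdeg : ∀ n : ℤ, 0 ≤ n → (P n).degree = (n.toNat : WithBot ℕ))
    (A B Cc : ℤ → ℝ) (hA : A (-1) = 0)
    (c : ℤ → ℤ → ℝ) (hc : ∀ m k : ℤ, k ≤ 0 ∨ m < k → c m k = 0)
    (hrec : ∀ n : ℤ, 0 ≤ n →
      Polynomial.X * P n =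
        Polynomial.C (A n) * P (n + 1) + Polynomial.C (B n) * P n
          + Polynomial.C (Cc n) * P (n - 1))
    (hder : ∀ n : ℤ, 1 ≤ n →
      Polynomial.derivative (P n) =
        ∑ k ∈ Finset.Icc (1 : ℤ) n, Polynomial.C (c n k) * P (n - k)) :
    ∀ n k : ℤ, 1 ≤ n → 1 ≤ k → k ≤ n →
      A n * c (n + 1) (k + 1) - A (n - k - 1) * c n (k + 1)
        + (B n - B (n - k)) * c n k
        + Cc n * c (n - 1) (k - 1) - Cc (n - k + 1) * c n (k - 1) = 0 :=
  orthopoly_bnk_vanish_general P hPneg hPdeg A B Cc c hc hrec hder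
end

section
/- Let g be a real number and d ≥ 1 an integer, and set ξ(η) = L_d^{(g-1/2)}(-η) ∈ ℝ[η]. For n ≥ 0 let P_n = L_n^{(g-1/2)} and define F P_n = ξ·P_n' - (ξ + ξ')·P_n ∈ ℝ[η]. Then the polynomial identity η·(F P_n)' + (g + 1/2)·(F P_n) = -(n + g + d + 1/2)·ξ·P_n holds in ℝ[η]. -/
open Polynomial

/-- The Laguerre polynomial `L_n^{(α)}` with real parameter:
`L_n^{(α)}(x) = Σ_{k=0}^{n} (-1)^k (α+k+1)_{n-k} / ((n-k)!·k!) · x^k`. -/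
noncomputable def laguerreP (α : ℝ) (n : ℕ) : Polynomial ℝ :=
  ∑ k ∈ Finset.range (n + 1),
    Polynomial.C ((-1 : ℝ) ^ k * (ascPochhammer ℝ (n - k)).eval (α + k + 1) /
        ((n - k).factorial * k.factorial)) * Polynomial.X ^ k

/-!
Both `P = L_n^{(α)}` and `ξ = L_d^{(α)}(-η)` satisfy second-order equations,
`η P'' + (α + 1 - η) P' + n P = 0` (read off from the two-term recurrence of the
coefficients of `L_n^{(α)}`) and, substituting `η ↦ -η` in the equation for `L_d^{(α)}`,
`η ξ'' + (α + 1 + η) ξ' - d ξ = 0`. Expanding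
`η (F P)' + (α + 1)(F P)` and eliminating `P''` and `ξ''` with these equations leaves
`-(n + α + 1 + d) ξ P`.
-/

lemma laguerreP_coeff (α : ℝ) (n k : ℕ) :
    (laguerreP α n).coeff k = if k ≤ n then
      (-1 : ℝ) ^ k * (ascPochhammer ℝ (n - k)).eval (α + k + 1) /
        ((n - k).factorial * k.factorial) else 0 := by
  simp [laguerreP, finsetSum_coeff, coeff_C_mul, coeff_X_pow]

lemma ascPochhammer_succ_eval_left {S : Type*} [CommSemiring S] (m : ℕ) (x : S) :
    (ascPochhammer S (m + 1)).eval x = x * (ascPochhammer S m).eval (x + 1) := by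
  simp [ascPochhammer_succ_left, eval_comp]

lemma laguerreP_coeff_succ (α : ℝ) (n k : ℕ) :
    ((k : ℝ) + 1) * (α + k + 1) * (laguerreP α n).coeff (k + 1)
      = ((k : ℝ) - n) * (laguerreP α n).coeff k := by
  rw [laguerreP_coeff, laguerreP_coeff]
  rcases lt_trichotomy k n with hlt | rfl | hgt
  · obtain ⟨m, rfl⟩ : ∃ m, n = k + 1 + m := ⟨n - (k + 1), by omega⟩
    rw [if_pos (by omega), if_pos (by omega),
      show k + 1 + m - (k + 1) = m by omega, show k + 1 + m - k = m + 1 by omega,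
      ascPochhammer_succ_eval_left, Nat.factorial_succ, Nat.factorial_succ]
    have hm : (m.factorial : ℝ) ≠ 0 := by positivity
    have hk : (k.factorial : ℝ) ≠ 0 := by positivity
    push_cast
    field_simp
    ring_nf
  · simp
  · rw [if_neg (by omega), if_neg (by omega)]
    simp

lemma laguerreP_ode (α : ℝ) (n : ℕ) :
    X * derivative (derivative (laguerreP α n))
      + (C (α + 1) - X) * derivative (laguerreP α n) + C (n : ℝ) * laguerreP α n = 0 := by
  ext k
  have hrec := laguerreP_coeff_succ α n k
  rcases k with _ | k
  · simp only [coeff_add, coeff_zero, sub_mul, coeff_sub, mul_coeff_zero, coeff_X_zero,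
      zero_mul, coeff_derivative, coeff_C_zero]
    push_cast at hrec ⊢
    linear_combination hrec
  · simp only [coeff_add, coeff_zero, sub_mul, coeff_sub, coeff_X_mul, coeff_C_mul,
      coeff_derivative]
    push_cast at hrec ⊢
    linear_combination hrec

lemma ode_comp_neg_X {R : Type*} [CommRing R] {p : R[X]} {a b : R}
    (hp : X * derivative (derivative p) + (C a - X) * derivative p + C b * p = 0) :
    X * derivative (derivative (p.comp (-X))) + (C a + X) * derivative (p.comp (-X))
      - C b * p.comp (-X) = 0 := by
  have h1 : derivative (p.comp (-X)) = -(derivative p).comp (-X) := by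
    simp [derivative_comp]
  have h2 : derivative (derivative (p.comp (-X))) = (derivative (derivative p)).comp (-X) := by
    simp [h1, derivative_comp]
  have hp' := congrArg (fun q => q.comp (-X)) hp
  simp only [add_comp, mul_comp, sub_comp, X_comp, C_comp, zero_comp] at hp'
  rw [h2, h1]
  linear_combination -hp'

lemma forward_backward_of_ode {R : Type*} [CommRing R] {P ξ : R[X]} {a n m : R}
    (hP : X * derivative (derivative P) + (C a - X) * derivative P + C n * P = 0)
    (hξ : X * derivative (derivative ξ) + (C a + X) * derivative ξ - C m * ξ = 0) :
    X * derivative (ξ * derivative P - (ξ + derivative ξ) * P)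
      + C a * (ξ * derivative P - (ξ + derivative ξ) * P) = -C (n + a + m) * ξ * P := by
  simp only [derivative_sub, derivative_mul, derivative_add, C_add]
  linear_combination ξ * hP - P * hξ

theorem xlaguerre_backward_forward_general (g : ℝ) (d : ℕ) (n : ℕ)
    (ξ : Polynomial ℝ) (hξ : ξ = (laguerreP (g - 1/2) d).comp (-Polynomial.X)) :
    Polynomial.X * Polynomial.derivative
        (ξ * Polynomial.derivative (laguerreP (g - 1/2) n)
          - (ξ + Polynomial.derivative ξ) * laguerreP (g - 1/2) n)
      + Polynomial.C (g + 1/2) *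
        (ξ * Polynomial.derivative (laguerreP (g - 1/2) n)
          - (ξ + Polynomial.derivative ξ) * laguerreP (g - 1/2) n)
    = -(Polynomial.C ((n : ℝ) + g + (d : ℝ) + 1/2)) * ξ * laguerreP (g - 1/2) n := by
  have hα : g - 1/2 + 1 = g + 1/2 := by ring
  have hP := laguerreP_ode (g - 1/2) n
  have hξ_ode := hξ ▸ ode_comp_neg_X (laguerreP_ode (g - 1/2) d)
  rw [hα] at hP hξ_ode
  rw [show (n : ℝ) + g + d + 1/2 = n + (g + 1/2) + d by ring]
  exact forward_backward_of_ode hP hξ_ode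

/-- with `ξ(η) = L_d^{(g-1/2)}(-η)`, `P_n = L_n^{(g-1/2)}` and
`F P_n = ξP_n' - (ξ+ξ')P_n`, the polynomial identity
`η(F P_n)' + (g+½)(F P_n) = -(n+g+d+½) ξ P_n` holds. -/
theorem xlaguerre_backward_forward (g : ℝ) (d : ℕ) (hd : 1 ≤ d) (n : ℕ)
    (ξ : Polynomial ℝ) (hξ : ξ = (laguerreP (g - 1/2) d).comp (-Polynomial.X)) :
    Polynomial.X * Polynomial.derivative
        (ξ * Polynomial.derivative (laguerreP (g - 1/2) n)
          - (ξ + Polynomial.derivative ξ) * laguerreP (g - 1/2) n)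
      + Polynomial.C (g + 1/2) *
        (ξ * Polynomial.derivative (laguerreP (g - 1/2) n)
          - (ξ + Polynomial.derivative ξ) * laguerreP (g - 1/2) n)
    = -(Polynomial.C ((n : ℝ) + g + (d : ℝ) + 1/2)) * ξ * laguerreP (g - 1/2) n :=
  xlaguerre_backward_forward_general g d n ξ hξ
end

section
/- Let M ≥ 1, let d_1 < d_2 < ⋯ < d_M be distinct positive integers, and let g be a real number. Define ξ_v(η) = L_v^{(g-1/2)}(-η), Ξ_D(η) = W[ξ_{d_1}, …, ξ_{d_M}](η), and for n ≥ 0 the polynomial P_{D,n}(η) = det A(η), where A is the (M+1)×(M+1) matrix whose (j,k) entry for 1 ≤ k ≤ M is ξ_{d_k}^{(j-1)}(η) and whose (j, M+1) entry is ((d/dη - 1)^{j-1} L_n^{(g-1/2)})(η). Let ℓ_D = Σ_{j=1}^M d_j - M(M-1)/2 and c_D^Ξ = ( Π_{j=1}^M 1/d_j! ) · Π_{1≤j<k≤M} (d_k - d_j). Then: (i) Ξ_D has degree ℓ_D and leading coefficient c_D^Ξ; (ii) for every n ≥ 0, P_{D,n} has degree ℓ_D + n and leading coefficient (-1)^M ·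 ((-1)^n / n!) · c_D^Ξ. In particular both leading coefficients are nonzero for every real g. -/
open Polynomial

/-- The type I virtual polynomial `ξ_v(η) = L_v^{(g-1/2)}(-η)`. -/
noncomputable def lagXi (g : ℝ) (v : ℕ) : Polynomial ℝ :=
  (laguerreP (g - 1/2) v).comp (-Polynomial.X)

/-- The denominator polynomial `Ξ_D(η) = W[ξ_{d_1}, …, ξ_{d_M}](η)` of the
type I multi-indexed Laguerre polynomials. -/
noncomputable def lagXiD (M : ℕ) (d : Fin M → ℕ) (g : ℝ) : Polynomial ℝ :=
  Matrix.det (Matrix.of fun j k : Fin M =>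
    (fun q => Polynomial.derivative q)^[(j : ℕ)] (lagXi g (d k)))

/-- The type I multi-indexed Laguerre polynomial `P_{D,n}`, as the
`(M+1)×(M+1)` determinant whose first `M` columns are the iterated derivatives of
`ξ_{d_k}` and whose last column consists of `(d/dη - 1)^{j-1} L_n^{(g-1/2)}`. -/
noncomputable def lagPD (M : ℕ) (d : Fin M → ℕ) (g : ℝ) (n : ℕ) : Polynomial ℝ :=
  Matrix.det (Matrix.of fun j k : Fin (M + 1) =>
    if hk : (k : ℕ) < M then
      (fun q => Polynomial.derivative q)^[(j : ℕ)] (lagXi g (d ⟨(k : ℕ), hk⟩))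
    else
      (fun q => Polynomial.derivative q - q)^[(j : ℕ)] (laguerreP (g - 1/2) n))

/-!
Multiply row `j` of each determinant by `η ^ j`. For a Wronskian-type matrix this makes every
entry of column `k` a polynomial of degree at most the degree `e k` of the function heading that
column (`d k` for `ξ_{d_k}`, and `n + M` for the last column of `P_{D,n}`, since `d/dη - 1`
preserves degrees). The coefficient of `η ^ ∑ e k` of the scaled determinant is then the
determinant of the top coefficients. For `ξ_{d_k}` these are
`d_k (d_k - 1) ⋯ (d_k - j + 1) / d_k!`, whose determinant is a Vandermonde determinant in the
`d_k` up to the factor `∏ 1 / d_k!`; it is nonzero because the `d_k` are distinct. Dividing out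
the factor `η ^ ∑ j` gives the degrees.
-/

open Finset Matrix

namespace Polynomial

section CommSemiring

variable {R : Type*} [CommSemiring R]

theorem coeff_prod_sum_of_natDegree_le {ι : Type*} (s : Finset ι) (p : ι → R[X])
    (e : ι → ℕ) (h : ∀ i ∈ s, (p i).natDegree ≤ e i) :
    (∏ i ∈ s, p i).coeff (∑ i ∈ s, e i) = ∏ i ∈ s, (p i).coeff (e i) := by
  induction s using Finset.cons_induction with
  | empty => simp
  | cons a s ha ih =>
    have hs : ∀ i ∈ s, (p i).natDegree ≤ e i := fun i hi => h i (mem_cons_of_mem hi)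
    rw [prod_cons, sum_cons, prod_cons, coeff_mul_add_eq_of_natDegree_le (h a (mem_cons_self a s))
      ((natDegree_prod_le _ _).trans (sum_le_sum hs)), ih hs]

theorem natDegree_X_pow_mul_iterate_derivative_le {f : R[X]} {D : ℕ} (hf : f.natDegree ≤ D)
    (j : ℕ) : (X ^ j * derivative^[j] f).natDegree ≤ D := by
  rcases le_or_gt j f.natDegree with hj | hj
  · refine natDegree_mul_le.trans ?_
    have := natDegree_iterate_derivative f j
    have := natDegree_X_pow_le (R := R) j
    omega
  · simp [iterate_derivative_eq_zero hj]

theorem coeff_X_pow_mul_iterate_derivative (f : R[X]) (D j : ℕ) :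
    (X ^ j * derivative^[j] f).coeff D = D.descFactorial j * f.coeff D := by
  rw [coeff_X_pow_mul']
  split_ifs with hj
  · rw [coeff_iterate_derivative, Nat.sub_add_cancel hj, nsmul_eq_mul]
  · simp [Nat.descFactorial_eq_zero_iff_lt.mpr (not_le.mp hj)]

end CommSemiring

section CommRing

variable {R : Type*} [CommRing R]

theorem coeff_comp_neg_X (p : R[X]) (k : ℕ) : (p.comp (-X)).coeff k = (-1) ^ k * p.coeff k := by
  rw [← neg_one_mul (X : R[X]), ← C_1, ← C_neg, comp_C_mul_X_coeff, mul_comm]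

theorem natDegree_iterate_derivative_sub_self_le {f : R[X]} {n : ℕ} (hf : f.natDegree ≤ n)
    (j : ℕ) : ((fun q => derivative q - q)^[j] f).natDegree ≤ n := by
  induction j with
  | zero => exact hf
  | succ j ih =>
    rw [Function.iterate_succ_apply']
    exact (natDegree_sub_le _ _).trans (max_le ((natDegree_derivative_le _).trans (by omega)) ih)

theorem coeff_iterate_derivative_sub_self {f : R[X]} {n : ℕ} (hf : f.natDegree ≤ n) (j : ℕ) :
    ((fun q => derivative q - q)^[j] f).coeff n = (-1) ^ j * f.coeff n := by
  induction j with
  | zero => simp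
  | succ j ih =>
    rw [Function.iterate_succ_apply', coeff_sub, coeff_derivative, ih,
      coeff_eq_zero_of_natDegree_lt ((natDegree_iterate_derivative_sub_self_le hf j).trans_lt
        n.lt_succ_self)]
    ring

end CommRing

end Polynomial

namespace Matrix

variable {n R : Type*} [Fintype n] [DecidableEq n] [CommRing R]

theorem natDegree_det_le_sum (A : Matrix n n R[X]) (e : n → ℕ)
    (h : ∀ i j, (A i j).natDegree ≤ e j) : A.det.natDegree ≤ ∑ j, e j := by
  rw [det_apply']
  refine natDegree_sum_le_of_forall_le _ _ fun σ _ => natDegree_mul_le.trans ?_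
  rw [natDegree_intCast, zero_add]
  exact (natDegree_prod_le _ _).trans (sum_le_sum fun j _ => h (σ j) j)

theorem coeff_det_eq_det_coeff (A : Matrix n n R[X]) (e : n → ℕ)
    (h : ∀ i j, (A i j).natDegree ≤ e j) :
    A.det.coeff (∑ j, e j) = (of fun i j => (A i j).coeff (e j)).det := by
  rw [det_apply, det_apply, finsetSum_coeff]
  refine sum_congr rfl fun σ _ => ?_
  rw [coeff_smul, coeff_prod_sum_of_natDegree_le _ _ _ fun j _ => h (σ j) j]
  rfl

theorem det_of_X_pow_mul (A : Matrix n n R[X]) (r : n → ℕ) :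
    (of fun i j => X ^ r i * A i j).det = X ^ (∑ i, r i) * A.det := by
  rw [det_mul_column, prod_pow_eq_pow_sum]

theorem natDegree_det_eq_sum (A : Matrix n n R[X]) (e : n → ℕ)
    (hdeg : ∀ i j, (A i j).natDegree ≤ e j)
    (hc : (of fun i j => (A i j).coeff (e j)).det ≠ 0) : A.det.natDegree = ∑ j, e j :=
  natDegree_eq_of_le_of_coeff_ne_zero (natDegree_det_le_sum A e hdeg)
    (by rwa [coeff_det_eq_det_coeff A e hdeg])

theorem leadingCoeff_det_eq_det_coeff (A : Matrix n n R[X]) (e : n → ℕ)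
    (hdeg : ∀ i j, (A i j).natDegree ≤ e j)
    (hc : (of fun i j => (A i j).coeff (e j)).det ≠ 0) :
    A.det.leadingCoeff = (of fun i j => (A i j).coeff (e j)).det := by
  rw [leadingCoeff, natDegree_det_eq_sum A e hdeg hc, coeff_det_eq_det_coeff A e hdeg]

theorem sum_add_natDegree_det_eq_sum (A : Matrix n n R[X]) (r e : n → ℕ)
    (hdeg : ∀ i j, (X ^ r i * A i j).natDegree ≤ e j)
    (hc : (of fun i j => (X ^ r i * A i j).coeff (e j)).det ≠ 0) :
    ∑ i, r i + A.det.natDegree = ∑ j, e j := by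
  have := nontrivial_of_ne _ _ hc
  have hB := natDegree_det_eq_sum (of fun i j => X ^ r i * A i j) e hdeg hc
  have hA : A.det ≠ 0 := by
    rintro h
    have := coeff_det_eq_det_coeff (of fun i j => X ^ r i * A i j) e hdeg
    rw [det_of_X_pow_mul, h, mul_zero, coeff_zero] at this
    exact hc this.symm
  rw [← hB, det_of_X_pow_mul, natDegree_X_pow_mul _ hA, add_comm]

theorem leadingCoeff_det_eq_det_coeff_X_pow_mul (A : Matrix n n R[X]) (r e : n → ℕ)
    (hdeg : ∀ i j, (X ^ r i * A i j).natDegree ≤ e j)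
    (hc : (of fun i j => (X ^ r i * A i j).coeff (e j)).det ≠ 0) :
    A.det.leadingCoeff = (of fun i j => (X ^ r i * A i j).coeff (e j)).det := by
  have hB := leadingCoeff_det_eq_det_coeff (of fun i j => X ^ r i * A i j) e hdeg hc
  rwa [det_of_X_pow_mul, leadingCoeff_monic_mul (monic_X_pow _)] at hB

theorem det_succ_eq_mul_det_castSucc {m : ℕ} (A : Matrix (Fin (m + 1)) (Fin (m + 1)) R)
    (h : ∀ i : Fin m, A i.castSucc (Fin.last m) = 0) :
    A.det = A (Fin.last m) (Fin.last m) * (A.submatrix Fin.castSucc Fin.castSucc).det := by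
  rw [det_succ_column A (Fin.last m), Fin.sum_univ_castSucc]
  simp [h, Fin.succAbove_last, ← two_mul]

theorem det_descFactorial [IsDomain R] {M : ℕ} (d : Fin M → ℕ) :
    (of fun j k : Fin M => ((d k).descFactorial j : R)).det =
      ∏ q ∈ univ.filter (fun q : Fin M × Fin M => q.1 < q.2), ((d q.2 : R) - d q.1) := by
  have hT : (of fun j k : Fin M => ((d k).descFactorial j : R)) =
      (of fun k j : Fin M => (descPochhammer R j).eval (d k : R))ᵀ := by
    ext j k
    simp [descPochhammer_eval_eq_descFactorial]
  rw [hT, det_transpose, ← det_eval_matrixOfPolynomials_eq_det_vandermonde _ _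
    (fun i => descPochhammer_natDegree R i) (fun i => monic_descPochhammer R i),
    det_vandermonde, prod_filter, Fintype.prod_prod_type]
  simp [prod_ite, Finset.filter_lt_eq_Ioi]

end Matrix

theorem laguerreP_natDegree_le (α : ℝ) (n : ℕ) : (laguerreP α n).natDegree ≤ n :=
  natDegree_sum_le_of_forall_le _ _ fun _ hk =>
    (natDegree_C_mul_X_pow_le _ _).trans (Nat.lt_succ_iff.mp (mem_range.mp hk))

theorem laguerreP_coeff_self (α : ℝ) (n : ℕ) :
    (laguerreP α n).coeff n = (-1) ^ n / n.factorial := by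
  rw [laguerreP, finsetSum_coeff, sum_eq_single n]
  · simp
  · intro k _ hkn
    rw [coeff_C_mul_X_pow, if_neg (Ne.symm hkn)]
  · simp

theorem lagXi_natDegree_le (g : ℝ) (v : ℕ) : (lagXi g v).natDegree ≤ v := by
  rw [lagXi, natDegree_eq_of_degree_eq degree_comp_neg_X]
  exact laguerreP_natDegree_le _ _

theorem lagXi_coeff_self (g : ℝ) (v : ℕ) : (lagXi g v).coeff v = (v.factorial : ℝ)⁻¹ := by
  rw [lagXi, coeff_comp_neg_X, laguerreP_coeff_self, mul_div, ← mul_pow]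
  simp

/-- The constant `c_D^Ξ`. -/
noncomputable def lagXiDLeadCoeff {M : ℕ} (d : Fin M → ℕ) : ℝ :=
  (∏ j, ((d j).factorial : ℝ)⁻¹) *
    ∏ q ∈ univ.filter (fun q : Fin M × Fin M => q.1 < q.2), ((d q.2 : ℝ) - d q.1)

theorem lagXiDLeadCoeff_ne_zero {M : ℕ} {d : Fin M → ℕ} (hd : Function.Injective d) :
    lagXiDLeadCoeff d ≠ 0 := by
  refine mul_ne_zero (prod_ne_zero_iff.mpr fun j _ => by positivity)
    (prod_ne_zero_iff.mpr fun q hq => sub_ne_zero_of_ne ?_)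
  exact_mod_cast hd.ne (mem_filter.mp hq).2.ne'

theorem det_coeff_wronskian_lagXi (g : ℝ) {M : ℕ} (d : Fin M → ℕ) :
    (of fun j k : Fin M => (X ^ (j : ℕ) * derivative^[j] (lagXi g (d k))).coeff (d k)).det =
      lagXiDLeadCoeff d := by
  simp only [coeff_X_pow_mul_iterate_derivative, lagXi_coeff_self, mul_comm _ (_⁻¹ : ℝ)]
  rw [lagXiDLeadCoeff, ← det_descFactorial, ← det_mul_row]
  rfl

/-- The matrix `A(η)` with `P_{D,n} = det A`. -/
noncomputable def lagPDMatrix (M : ℕ) (d : Fin M → ℕ) (g : ℝ) (n : ℕ) :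
    Matrix (Fin (M + 1)) (Fin (M + 1)) ℝ[X] :=
  of fun j k : Fin (M + 1) =>
    if hk : (k : ℕ) < M then
      (fun q => derivative q)^[(j : ℕ)] (lagXi g (d ⟨(k : ℕ), hk⟩))
    else
      (fun q => derivative q - q)^[(j : ℕ)] (laguerreP (g - 1/2) n)

section MultiIndexed

variable {M : ℕ} {d : Fin M → ℕ}

theorem sum_add_natDegree_lagXiD (hd : Function.Injective d) (g : ℝ) :
    ∑ j : Fin M, (j : ℕ) + (lagXiD M d g).natDegree = ∑ j, d j :=
  Matrix.sum_add_natDegree_det_eq_sum _ (fun j : Fin M => (j : ℕ)) d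
    (fun j k => natDegree_X_pow_mul_iterate_derivative_le (lagXi_natDegree_le g (d k)) j)
    ((det_coeff_wronskian_lagXi g d).trans_ne (lagXiDLeadCoeff_ne_zero hd))

theorem leadingCoeff_lagXiD (hd : Function.Injective d) (g : ℝ) :
    (lagXiD M d g).leadingCoeff = lagXiDLeadCoeff d :=
  (Matrix.leadingCoeff_det_eq_det_coeff_X_pow_mul _ (fun j : Fin M => (j : ℕ)) d
    (fun j k => natDegree_X_pow_mul_iterate_derivative_le (lagXi_natDegree_le g (d k)) j)
    ((det_coeff_wronskian_lagXi g d).trans_ne (lagXiDLeadCoeff_ne_zero hd))).trans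
    (det_coeff_wronskian_lagXi g d)

theorem lagPD_eq_det (g : ℝ) (n : ℕ) : lagPD M d g n = (lagPDMatrix M d g n).det := rfl

theorem lagPDMatrix_castSucc (g : ℝ) (n : ℕ) (j : Fin (M + 1)) (k : Fin M) :
    lagPDMatrix M d g n j k.castSucc = derivative^[j] (lagXi g (d k)) := by
  simp [lagPDMatrix]

theorem lagPDMatrix_last (g : ℝ) (n : ℕ) (j : Fin (M + 1)) :
    lagPDMatrix M d g n j (Fin.last M) =
      (fun q => derivative q - q)^[j] (laguerreP (g - 1/2) n) := by
  simp [lagPDMatrix]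

theorem natDegree_X_pow_mul_lagPDMatrix_last_le (g : ℝ) (n : ℕ) (j : Fin (M + 1)) :
    (X ^ (j : ℕ) * lagPDMatrix M d g n j (Fin.last M)).natDegree ≤ j + n := by
  rw [lagPDMatrix_last]
  refine natDegree_mul_le.trans (add_le_add (natDegree_X_pow_le _) ?_)
  exact natDegree_iterate_derivative_sub_self_le (laguerreP_natDegree_le _ _) _

theorem natDegree_X_pow_mul_lagPDMatrix_le (g : ℝ) (n : ℕ) (j k : Fin (M + 1)) :
    (X ^ (j : ℕ) * lagPDMatrix M d g n j k).natDegree ≤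
      (Fin.snoc d (n + M) : Fin (M + 1) → ℕ) k := by
  induction k using Fin.lastCases with
  | last =>
    rw [Fin.snoc_last]
    exact (natDegree_X_pow_mul_lagPDMatrix_last_le g n j).trans (by omega)
  | cast k =>
    rw [Fin.snoc_castSucc, lagPDMatrix_castSucc]
    exact natDegree_X_pow_mul_iterate_derivative_le (lagXi_natDegree_le g (d k)) j

/-- In the last column only the last row reaches degree `n + M`, so the top-coefficient matrix
is block triangular, with the one of `Ξ_D` in the upper left corner. -/
theorem det_coeff_lagPDMatrix (g : ℝ) (n : ℕ) :
    (of fun j k : Fin (M + 1) =>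
      (X ^ (j : ℕ) * lagPDMatrix M d g n j k).coeff
        ((Fin.snoc d (n + M) : Fin (M + 1) → ℕ) k)).det =
      (-1) ^ M * ((-1) ^ n / n.factorial) * lagXiDLeadCoeff d := by
  rw [Matrix.det_succ_eq_mul_det_castSucc]
  · congr 1
    · simp only [of_apply, Fin.snoc_last, Fin.val_last, lagPDMatrix_last, coeff_X_pow_mul,
        coeff_iterate_derivative_sub_self (laguerreP_natDegree_le _ _), laguerreP_coeff_self]
    · rw [← det_coeff_wronskian_lagXi g d]
      congr 1
      ext j k
      simp [lagPDMatrix_castSucc]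
  · intro j
    refine coeff_eq_zero_of_natDegree_lt
      ((natDegree_X_pow_mul_lagPDMatrix_last_le g n _).trans_lt ?_)
    simp only [Fin.snoc_last, Fin.val_castSucc]
    omega

theorem neg_one_pow_mul_lagXiDLeadCoeff_ne_zero (hd : Function.Injective d) (n : ℕ) :
    (-1) ^ M * ((-1) ^ n / n.factorial) * lagXiDLeadCoeff d ≠ 0 :=
  mul_ne_zero (by simp [Nat.factorial_ne_zero]) (lagXiDLeadCoeff_ne_zero hd)

theorem natDegree_lagPD (hd : Function.Injective d) (g : ℝ) (n : ℕ) :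
    (lagPD M d g n).natDegree = (lagXiD M d g).natDegree + n := by
  have hPD := Matrix.sum_add_natDegree_det_eq_sum _ (fun j : Fin (M + 1) => (j : ℕ)) _
    (natDegree_X_pow_mul_lagPDMatrix_le g n)
    ((det_coeff_lagPDMatrix g n).trans_ne (neg_one_pow_mul_lagXiDLeadCoeff_ne_zero hd n))
  have hXi := sum_add_natDegree_lagXiD hd g
  simp only [Fin.sum_univ_castSucc, Fin.val_castSucc, Fin.val_last, Fin.snoc_castSucc,
    Fin.snoc_last] at hPD
  rw [lagPD_eq_det]
  omega

theorem leadingCoeff_lagPD (hd : Function.Injective d) (g : ℝ) (n : ℕ) :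
    (lagPD M d g n).leadingCoeff = (-1) ^ M * ((-1) ^ n / n.factorial) * lagXiDLeadCoeff d :=
  (Matrix.leadingCoeff_det_eq_det_coeff_X_pow_mul _ (fun j : Fin (M + 1) => (j : ℕ)) _
    (natDegree_X_pow_mul_lagPDMatrix_le g n)
    ((det_coeff_lagPDMatrix g n).trans_ne (neg_one_pow_mul_lagXiDLeadCoeff_ne_zero hd n))).trans
    (det_coeff_lagPDMatrix g n)

end MultiIndexed

theorem multiindexed_laguerre_degrees_general (M : ℕ)
    (d : Fin M → ℕ) (hmono : StrictMono d) (g : ℝ)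
    (ℓD : ℕ) (hℓ : ℓD = (∑ j, d j) - M * (M - 1) / 2)
    (cΞ : ℝ)
    (hc : cΞ = (∏ j, ((d j).factorial : ℝ)⁻¹) *
      ∏ q ∈ Finset.univ.filter (fun q : Fin M × Fin M => q.1 < q.2),
        ((d q.2 : ℝ) - (d q.1 : ℝ))) :
    (lagXiD M d g).degree = (ℓD : WithBot ℕ) ∧
    (lagXiD M d g).leadingCoeff = cΞ ∧
    cΞ ≠ 0 ∧
    (∀ n : ℕ, (lagPD M d g n).degree = ((ℓD + n : ℕ) : WithBot ℕ) ∧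
      (lagPD M d g n).leadingCoeff = (-1 : ℝ) ^ M * ((-1 : ℝ) ^ n / n.factorial) * cΞ ∧
      (-1 : ℝ) ^ M * ((-1 : ℝ) ^ n / n.factorial) * cΞ ≠ 0) := by
  have hd := hmono.injective
  change cΞ = lagXiDLeadCoeff d at hc
  subst hc
  have hXi : (lagXiD M d g).natDegree = ℓD := by
    have h := sum_add_natDegree_lagXiD hd g
    rw [Fin.sum_univ_eq_sum_range (fun i => i) M, sum_range_id] at h
    omega
  have hXi_ne : lagXiD M d g ≠ 0 :=
    leadingCoeff_ne_zero.mp ((leadingCoeff_lagXiD hd g).trans_ne (lagXiDLeadCoeff_ne_zero hd))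
  refine ⟨by rw [degree_eq_natDegree hXi_ne, hXi], leadingCoeff_lagXiD hd g,
    lagXiDLeadCoeff_ne_zero hd, fun n => ?_⟩
  have hc_ne := neg_one_pow_mul_lagXiDLeadCoeff_ne_zero hd n
  have hPD_ne : lagPD M d g n ≠ 0 :=
    leadingCoeff_ne_zero.mp ((leadingCoeff_lagPD hd g n).trans_ne hc_ne)
  refine ⟨?_, leadingCoeff_lagPD hd g n, hc_ne⟩
  rw [degree_eq_natDegree hPD_ne, natDegree_lagPD hd g n, hXi]

/-- degrees and leading coefficients of `Ξ_D` and `P_{D,n}` in the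
type I Laguerre case: `deg Ξ_D = ℓ_D`, `lc Ξ_D = c_D^Ξ = (∏ 1/d_j!)·∏_{j<k}(d_k-d_j)`,
`deg P_{D,n} = ℓ_D + n`, `lc P_{D,n} = (-1)^M ((-1)^n/n!) c_D^Ξ`, with
`ℓ_D = Σ d_j - M(M-1)/2`; in particular both leading coefficients are nonzero. -/
theorem multiindexed_laguerre_degrees (M : ℕ) (hM : 1 ≤ M)
    (d : Fin M → ℕ) (hmono : StrictMono d) (hd1 : ∀ j, 1 ≤ d j) (g : ℝ)
    (ℓD : ℕ) (hℓ : ℓD = (∑ j, d j) - M * (M - 1) / 2)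
    (cΞ : ℝ)
    (hc : cΞ = (∏ j, ((d j).factorial : ℝ)⁻¹) *
      ∏ q ∈ Finset.univ.filter (fun q : Fin M × Fin M => q.1 < q.2),
        ((d q.2 : ℝ) - (d q.1 : ℝ))) :
    (lagXiD M d g).degree = (ℓD : WithBot ℕ) ∧
    (lagXiD M d g).leadingCoeff = cΞ ∧
    cΞ ≠ 0 ∧
    (∀ n : ℕ, (lagPD M d g n).degree = ((ℓD + n : ℕ) : WithBot ℕ) ∧
      (lagPD M d g n).leadingCoeff = (-1 : ℝ) ^ M * ((-1 : ℝ) ^ n / n.factorial) * cΞ ∧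
      (-1 : ℝ) ^ M * ((-1 : ℝ) ^ n / n.factorial) * cΞ ≠ 0) :=
  multiindexed_laguerre_degrees_general M d hmono g ℓD hℓ cΞ hc
end
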